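/- arXiv:1712.00744 — 6 statements merged into one kernel-verified Lean document; each statement's English description precedes it below -/
import Mathlib

section
/- Let P be a quaternionic polynomial of degree 2. Then there exist x₁, x₂ ∈ ℍ (possibly with S_{x₁} = S_{x₂}) such that the zero set V(N(P)) of the normal polynomial equals S_{x₁} ∪ S_{x₂}, and the zero set of the derivative satisfies V(P') ⊆ { (y₁+y₂)/2 : y₁ ∈ S_{x₁}, y₂ ∈ S_{x₂} }. -/
open Polynomial
open scoped Classical RealInnerProductSpace ENNReal

noncomputable section

abbrev Hq : Type := Quaternion ℝ

/-- Right evaluation of a quaternionic polynomial: `P(x) = ∑ x^k * a_k`. -/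
def evalQ (P : Hq[X]) (x : Hq) : Hq := P.sum fun k a => x ^ k * a

/-- Zero set of a quaternionic polynomial (w.r.t. right evaluation). -/
def VQ (P : Hq[X]) : Set Hq := {x | evalQ P x = 0}

/-- Conjugate polynomial: coefficients conjugated. -/
def conjPoly (P : Hq[X]) : Hq[X] := P.sum fun k a => C (star a) * X ^ k

/-- Normal polynomial `N(P) = P * Pᶜ`. -/
def normalPoly (P : Hq[X]) : Hq[X] := P * conjPoly P

/-- The conjugacy sphere `S_x = {p x p⁻¹ : p ≠ 0}`. -/
def sphereOf (x : Hq) : Set Hq := {y | ∃ p : Hq, p ≠ 0 ∧ y = p * x * p⁻¹}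

/-- `P` is a Gauss-Lucas polynomial: `V(P') ⊆ K(N(P))`. -/
def GaussLucas (P : Hq[X]) : Prop :=
  VQ (derivative P) ⊆ convexHull ℝ (VQ (normalPoly P))

/-- The sphere of imaginary units. -/
def sphereS : Set Hq := {I | I ^ 2 = -1}

/-- The complex plane `C_I = ℝ + ℝI`. -/
def Cplane (I : Hq) : Set Hq := {x | ∃ a b : ℝ, x = algebraMap ℝ Hq a + b • I}

/-- Orthogonal projection onto `C_I`: `π_I(a) = ⟪a,1⟫•1 + ⟪a,I⟫•I`. -/
def piProj (I a : Hq) : Hq := (@inner ℝ Hq _ a (1 : Hq)) • (1 : Hq) + (@inner ℝ Hq _ a I) • I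

/-- The polynomial `P^I` with coefficients projected onto `C_I`. -/
def projPoly (I : Hq) (P : Hq[X]) : Hq[X] := P.sum fun k a => C (piProj I a) * X ^ k

/-- `K_{C_I}(Q)`: the convex hull in `C_I` of `V(Q) ∩ C_I` if the restriction of `Q`
to `C_I` is nonconstant, and `C_I` itself otherwise. -/
def KC (I : Hq) (Q : Hq[X]) : Set Hq :=
  if ∃ c, ∀ x ∈ Cplane I, evalQ Q x = c then Cplane I
  else convexHull ℝ (VQ Q ∩ Cplane I)

/-- The Gauss-Lucas snail `sn(P) = ⋃_{I ∈ S} K_{C_I}(P^I)`. -/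
def snail (P : Hq[X]) : Set Hq := ⋃ I ∈ sphereS, KC I (projPoly I P)

/-- The Cauchy bound `C(P) = |a_d|⁻¹ √(∑ |a_k|²)`. -/
def CQ (P : Hq[X]) : ℝ :=
  ‖P.leadingCoeff‖⁻¹ * Real.sqrt (∑ k ∈ Finset.range (P.natDegree + 1), ‖P.coeff k‖ ^ 2)

/-- Extended Cauchy bound, `+∞` on constant polynomials. -/
def CExt (P : Hq[X]) : ℝ≥0∞ :=
  if P.natDegree = 0 then ⊤ else ENNReal.ofReal (CQ P)

def qi : Hq := ⟨0, 1, 0, 0⟩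
def qj : Hq := ⟨0, 0, 1, 0⟩
def qk : Hq := ⟨0, 0, 0, 1⟩

/-- Polynomial with coefficient tuple `a`. -/
def polyOf {n : ℕ} (a : Fin (n + 1) → Hq) : Hq[X] :=
  ∑ k : Fin (n + 1), C (a k) * X ^ (k : ℕ)


namespace GLAux
open Quaternion

lemma evalQ_add (p q : Hq[X]) (x : Hq) : evalQ (p + q) x = evalQ p x + evalQ q x := by
  unfold evalQ
  apply Polynomial.sum_add_index <;> simp [mul_add]

lemma evalQ_monomial (k : ℕ) (a : Hq) (x : Hq) : evalQ (monomial k a) x = x ^ k * a := by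
  unfold evalQ
  rw [Polynomial.sum_monomial_index] ; simp

lemma sq_self (x : Hq) : x ^ 2 = x * ((2 * x.re : ℝ) : Hq) - ((normSq x : ℝ) : Hq) := by
  ext <;> simp [pow_two, Quaternion.re_mul, Quaternion.imI_mul, Quaternion.imJ_mul,
    Quaternion.imK_mul, Quaternion.normSq_def'] <;> ring

lemma re_mul_comm (a b : Hq) : (a * b).re = (b * a).re := by
  simp [Quaternion.re_mul] ; ring

lemma conj_re (p g : Hq) (hp : p ≠ 0) : (p * g * p⁻¹).re = g.re := by
  rw [re_mul_comm, ← mul_assoc, inv_mul_cancel₀ hp, one_mul]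

lemma conj_normSq (p g : Hq) (hp : p ≠ 0) : normSq (p * g * p⁻¹) = normSq g := by
  rw [map_mul, map_mul, map_inv₀]
  field_simp [Quaternion.normSq_ne_zero.2 hp]

def eI : Hq := ⟨0, 1, 0, 0⟩
def pPerp (g : Hq) : Hq := ⟨0, g.imJ, -g.imI, 0⟩

lemma mem_sphere_iff (g x : Hq) : x ∈ sphereOf g ↔ (x.re = g.re ∧ normSq x = normSq g) := by
  constructor
  · rintro ⟨p, hp, rfl⟩
    exact ⟨conj_re p g hp, conj_normSq p g hp⟩
  · rintro ⟨h1, h2⟩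
    by_cases hc : x - star g ≠ 0
    · refine ⟨x - star g, hc, ?_⟩
      have key : x * (x - star g) = (x - star g) * g := by
        rw [mul_sub, sub_mul, ← pow_two, sq_self x, h1, h2]
        have hsg : (star g) * g = ((normSq g : ℝ) : Hq) := Quaternion.star_mul_self g
        rw [hsg]
        have hg : ((2 * g.re : ℝ) : Hq) = g + star g := (Quaternion.self_add_star' g).symm
        rw [hg, mul_add]
        noncomm_ring
      rw [← key, mul_assoc, mul_inv_cancel₀ hc, mul_one]
    · push_neg at hc
      have hx : x = star g := by rwa [sub_eq_zero] at hc
      by_cases him : g.imI = 0 ∧ g.imJ = 0 ∧ g.imK = 0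
      · refine ⟨1, one_ne_zero, ?_⟩
        obtain ⟨h1', h2', h3'⟩ := him
        rw [hx]
        ext <;> simp [h1', h2', h3']
      · by_cases hij : g.imI = 0 ∧ g.imJ = 0
        · have hp : eI ≠ 0 := by
            intro h
            have := congrArg QuaternionAlgebra.imI h
            simp [eI] at this
          refine ⟨eI, hp, ?_⟩
          obtain ⟨h1', h2'⟩ := hij
          have key : (star g) * eI = eI * g := by
            ext <;> simp only [Quaternion.re_mul, Quaternion.imI_mul, Quaternion.imJ_mul,
              Quaternion.imK_mul] <;> simp [h1', h2', eI]
          rw [hx, ← key, mul_assoc, mul_inv_cancel₀ hp, mul_one]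
        · have hp : (pPerp g) ≠ 0 := by
            intro h
            apply hij
            have hI := congrArg QuaternionAlgebra.imI h
            have hJ := congrArg QuaternionAlgebra.imJ h
            simp [pPerp] at hI hJ
            exact ⟨hJ, hI⟩
          refine ⟨(pPerp g), hp, ?_⟩
          have key : (star g) * (pPerp g) = (pPerp g) * g := by
            ext <;> simp only [Quaternion.re_mul, Quaternion.imI_mul, Quaternion.imJ_mul,
              Quaternion.imK_mul] <;> simp [pPerp] <;> ring
          rw [hx, ← key, mul_assoc, mul_inv_cancel₀ hp, mul_one]

lemma qev_eq_zero_iff (g x : Hq) :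
    x ^ 2 - x * ((2 * g.re : ℝ) : Hq) + ((normSq g : ℝ) : Hq) = 0 ↔ x ∈ sphereOf g := by
  rw [mem_sphere_iff]
  constructor
  · intro h
    rw [sq_self x] at h
    have h2 : x * (((2*x.re - 2*g.re : ℝ)) : Hq) + ((normSq g - normSq x : ℝ) : Hq) = 0 := by
      rw [Quaternion.coe_sub, Quaternion.coe_sub, mul_sub, ← h]
      abel
    by_cases hre : x.re = g.re
    · refine ⟨hre, ?_⟩
      rw [hre, sub_self, Quaternion.coe_zero, mul_zero, zero_add, ← Quaternion.coe_zero] at h2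
      have := Quaternion.coe_injective h2
      linarith
    · exfalso
      have hL : (2 * x.re - 2 * g.re : ℝ) ≠ 0 := by
        intro h'; apply hre; linarith
      have e1 : x.imI = 0 ∧ x.imJ = 0 ∧ x.imK = 0 := by
        have c1 := congrArg QuaternionAlgebra.imI h2
        have c2 := congrArg QuaternionAlgebra.imJ h2
        have c3 := congrArg QuaternionAlgebra.imK h2
        simp [Quaternion.imI_mul, Quaternion.imJ_mul, Quaternion.imK_mul] at c1 c2 c3
        exact ⟨by rcases c1 with h'|h'; exact h'; exact absurd h' hL,
               by rcases c2 with h'|h'; exact h'; exact absurd h' hL,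
               by rcases c3 with h'|h'; exact h'; exact absurd h' hL⟩
      obtain ⟨e1', e2', e3'⟩ := e1
      have c0 := congrArg QuaternionAlgebra.re h2
      simp [Quaternion.re_mul, e1', e2', e3'] at c0
      have hnsx : normSq x = x.re ^ 2 := by
        rw [Quaternion.normSq_def', e1', e2', e3']; ring
      have hnsg := Quaternion.normSq_def' g
      have hpos : 0 < (x.re - g.re)^2 :=
        lt_of_le_of_ne (sq_nonneg _) (Ne.symm (pow_ne_zero 2 (sub_ne_zero.2 (fun h' => hre h'))))
      nlinarith [hpos, sq_nonneg g.imI, sq_nonneg g.imJ, sq_nonneg g.imK]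
  · rintro ⟨h1, h2⟩
    rw [sq_self x, h1, h2]
    noncomm_ring

lemma conjPoly_3 (a₀ a₁ a₂ : Hq) :
    conjPoly (monomial 0 a₀ + monomial 1 a₁ + monomial 2 a₂)
      = monomial 0 (star a₀) + monomial 1 (star a₁) + monomial 2 (star a₂) := by
  unfold conjPoly
  have hf : ∀ i : ℕ, C (star (0:Hq)) * X ^ i = 0 := by simp
  have hadd : ∀ (a : ℕ) (b₁ b₂ : Hq),
      C (star (b₁+b₂)) * X^a = C (star b₁)*X^a + C (star b₂)*X^a := by
    intro a b₁ b₂; rw [star_add, C_add, add_mul]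
  rw [Polynomial.sum_add_index _ _ _ hf hadd, Polynomial.sum_add_index _ _ _ hf hadd]
  simp [C_mul_X_pow_eq_monomial]

lemma evalQ_mul3 (a₀ a₁ a₂ b₀ b₁ b₂ x : Hq) :
    evalQ ((monomial 0 a₀ + monomial 1 a₁ + monomial 2 a₂)
      * (monomial 0 b₀ + monomial 1 b₁ + monomial 2 b₂)) x
    = a₀*b₀ + x*(a₀*b₁ + a₁*b₀) + x^2*(a₀*b₂ + a₁*b₁ + a₂*b₀)
      + x^3*(a₁*b₂ + a₂*b₁) + x^4*(a₂*b₂) := by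
  simp only [mul_add, add_mul, monomial_mul_monomial, evalQ_add, evalQ_monomial]
  norm_num
  noncomm_ring

lemma pair_star (u v : Hq) : u * star v + v * star u = ((2 * (u * star v).re : ℝ) : Hq) := by
  have h : v * star u = star (u * star v) := by rw [star_mul, star_star]
  rw [h, Quaternion.self_add_star']

lemma evalQ_normal (a₀ a₁ a₂ x : Hq) :
    evalQ (normalPoly (monomial 0 a₀ + monomial 1 a₁ + monomial 2 a₂)) x
    = ((normSq a₀ : ℝ) : Hq) + x * ((2 * (a₀ * star a₁).re : ℝ) : Hq)
      + x^2 * ((2 * (a₀ * star a₂).re + normSq a₁ : ℝ) : Hq)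
      + x^3 * ((2 * (a₁ * star a₂).re : ℝ) : Hq)
      + x^4 * ((normSq a₂ : ℝ) : Hq) := by
  unfold normalPoly
  rw [conjPoly_3, evalQ_mul3, pair_star a₀ a₁, pair_star a₁ a₂,
    Quaternion.self_mul_star a₀, Quaternion.self_mul_star a₁, Quaternion.self_mul_star a₂,
    show a₀ * star a₂ + ((normSq a₁ : ℝ) : Hq) + a₂ * star a₀
      = (a₀ * star a₂ + a₂ * star a₀) + ((normSq a₁ : ℝ) : Hq) from by abel,
    pair_star a₀ a₂, ← Quaternion.coe_add]

def cq : ℂ →+* Hq where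
  toFun z := ⟨z.re, z.im, 0, 0⟩
  map_one' := by ext <;> simp
  map_mul' z w := by
    ext
    · refine Eq.trans ?_ (Quaternion.re_mul _ _).symm; simp [Complex.mul_re, Complex.mul_im]
    · refine Eq.trans ?_ (Quaternion.imI_mul _ _).symm; simp [Complex.mul_re, Complex.mul_im]
    · refine Eq.trans ?_ (Quaternion.imJ_mul _ _).symm; simp [Complex.mul_re, Complex.mul_im]
    · refine Eq.trans ?_ (Quaternion.imK_mul _ _).symm; simp [Complex.mul_re, Complex.mul_im]
  map_zero' := by ext <;> simp
  map_add' z w := by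
    ext
    · refine Eq.trans ?_ (Quaternion.re_add _ _).symm; simp
    · refine Eq.trans ?_ (Quaternion.imI_add _ _).symm; simp
    · refine Eq.trans ?_ (Quaternion.imJ_add _ _).symm; simp
    · refine Eq.trans ?_ (Quaternion.imK_add _ _).symm; simp

lemma cq_real (r : ℝ) : cq ((r : ℝ) : ℂ) = ((r : ℝ) : Hq) := by
  ext <;> rfl

lemma lk_id (x : Hq) (c₀ c₁ c₂ c₃ c₄ : ℝ) :
    ((c₀ : ℝ) : Hq) + x * ((c₁ : ℝ) : Hq) + x^2 * ((c₂ : ℝ) : Hq)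
      + x^3 * ((c₃ : ℝ) : Hq) + x^4 * ((c₄ : ℝ) : Hq)
    = x * ((c₁ + 2*x.re*c₂ + (4*x.re^2 - normSq x)*c₃
          + (8*x.re^3 - 4*x.re*normSq x)*c₄ : ℝ) : Hq)
      + ((c₀ - normSq x*c₂ - 2*x.re*normSq x*c₃
          + (normSq x^2 - 4*x.re^2*normSq x)*c₄ : ℝ) : Hq) := by
  ext <;> simp [pow_succ, Quaternion.re_mul, Quaternion.imI_mul, Quaternion.imJ_mul,
    Quaternion.imK_mul, Quaternion.normSq_def'] <;> ring

lemma comb_id (x : Hq) (u m v n r : ℝ) :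
    ((r*(m*n) : ℝ) : Hq) + x * ((-(r*(u*n+v*m)) : ℝ) : Hq)
      + x^2 * ((r*(m+n+u*v) : ℝ) : Hq) + x^3 * ((-(r*(u+v)) : ℝ) : Hq)
      + x^4 * ((r : ℝ) : Hq)
    = ((x^2 - x * ((u : ℝ) : Hq) + ((m : ℝ) : Hq))
        * (x^2 - x * ((v : ℝ) : Hq) + ((n : ℝ) : Hq))) * ((r : ℝ) : Hq) := by
  ext <;> simp [pow_succ, Quaternion.re_mul, Quaternion.imI_mul, Quaternion.imJ_mul,
    Quaternion.imK_mul] <;> ring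

lemma L_id (a₀ a₁ a₂ : Hq) (s m : ℝ) :
    2*(a₀ * star a₁).re + 2*s*(2*(a₀*star a₂).re + normSq a₁)
      + (4*s^2-m)*(2*(a₁*star a₂).re) + (8*s^3-4*s*m)*(normSq a₂)
    = 2*((a₁ + ((2*s : ℝ):Hq)*a₂) * star (a₀ - ((m : ℝ):Hq)*a₂)).re
      + 2*s*normSq (a₁ + ((2*s : ℝ):Hq)*a₂) := by
  simp [Quaternion.normSq_def', Quaternion.re_mul, Quaternion.imI_mul, Quaternion.imJ_mul,
    Quaternion.imK_mul]
  ring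

lemma K_id (a₀ a₁ a₂ : Hq) (s m : ℝ) :
    normSq a₀ - m*(2*(a₀*star a₂).re + normSq a₁) - 2*s*m*(2*(a₁*star a₂).re)
      + (m^2-4*s^2*m)*(normSq a₂)
    = normSq (a₀ - ((m : ℝ):Hq)*a₂) - m*normSq (a₁ + ((2*s : ℝ):Hq)*a₂) := by
  simp [Quaternion.normSq_def', Quaternion.re_mul, Quaternion.imI_mul, Quaternion.imJ_mul,
    Quaternion.imK_mul]
  ring

set_option maxHeartbeats 1000000 in
lemma real_eval_sq (a₀ a₁ a₂ : Hq) (r : ℝ) :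
    (a₀ + ((r:ℝ):Hq)*a₁ + ((r:ℝ):Hq)^2*a₂) * star (a₀ + ((r:ℝ):Hq)*a₁ + ((r:ℝ):Hq)^2*a₂)
    = ((normSq a₀ : ℝ):Hq) + ((r:ℝ):Hq) * ((2*(a₀*star a₁).re : ℝ):Hq)
      + ((r:ℝ):Hq)^2 * ((2*(a₀*star a₂).re + normSq a₁ : ℝ):Hq)
      + ((r:ℝ):Hq)^3 * ((2*(a₁*star a₂).re : ℝ):Hq)
      + ((r:ℝ):Hq)^4 * ((normSq a₂ : ℝ):Hq) := by
  ext <;> simp [pow_succ, Quaternion.re_mul, Quaternion.imI_mul, Quaternion.imJ_mul,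
    Quaternion.imK_mul, Quaternion.normSq_def'] <;> ring

lemma re_mul_star_comm (a b : Hq) : (a * star b).re = (b * star a).re := by
  simp [Quaternion.re_mul] ; ring

lemma eval_via_d (a₀ a₁ a₂ y : Hq) (s m : ℝ)
    (hy : y^2 = y * ((2*s : ℝ):Hq) - ((m : ℝ):Hq)) :
    a₀ + y*a₁ + y^2*a₂ = y*(a₁ + ((2*s : ℝ):Hq)*a₂) + (a₀ - ((m : ℝ):Hq)*a₂) := by
  rw [hy] ; noncomm_ring

lemma exists_root (a₀ a₁ a₂ : Hq) (ha : a₂ ≠ 0) :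
    ∃ α : Hq, a₀ + α*a₁ + α^2*a₂ = 0 := by
  set c₀ : ℝ := normSq a₀ with hc₀
  set c₁ : ℝ := 2*(a₀*star a₁).re with hc₁
  set c₂ : ℝ := 2*(a₀*star a₂).re + normSq a₁ with hc₂
  set c₃ : ℝ := 2*(a₁*star a₂).re with hc₃
  set c₄ : ℝ := normSq a₂ with hc₄
  have hc4 : c₄ ≠ 0 := Quaternion.normSq_ne_zero.2 ha
  set Qc : ℂ[X] := C (c₄:ℂ) * X^4 + C (c₃:ℂ)*X^3 + C (c₂:ℂ)*X^2 + C (c₁:ℂ)*X + C (c₀:ℂ)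
    with hQc
  have hdeg : Qc.degree = 4 := by
    rw [hQc]
    compute_degree!
    all_goals exact_mod_cast hc4
  obtain ⟨z, hz⟩ := Complex.exists_root (f := Qc) (by rw [hdeg] ; norm_num)
  have hz' : (c₄:ℂ)*z^4 + (c₃:ℂ)*z^3 + (c₂:ℂ)*z^2 + (c₁:ℂ)*z + (c₀:ℂ) = 0 := by
    have := hz
    simp [Polynomial.IsRoot, hQc] at this
    linear_combination this
  set x : Hq := cq z with hxdef
  have hT : ((c₀:ℝ):Hq) + x*((c₁:ℝ):Hq) + x^2*((c₂:ℝ):Hq) + x^3*((c₃:ℝ):Hq)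
      + x^4*((c₄:ℝ):Hq) = 0 := by
    have h2 := congrArg cq hz'
    simp only [map_add, map_mul, map_pow, map_zero, cq_real] at h2
    have h3 : ((c₀:ℝ):Hq) + x*((c₁:ℝ):Hq) + x^2*((c₂:ℝ):Hq) + x^3*((c₃:ℝ):Hq)
        + x^4*((c₄:ℝ):Hq)
        = ((c₄:ℝ):Hq) * (cq z)^4 + ((c₃:ℝ):Hq)*(cq z)^3 + ((c₂:ℝ):Hq)*(cq z)^2
          + ((c₁:ℝ):Hq)*(cq z) + ((c₀:ℝ):Hq) := by
      rw [hxdef]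
      rw [Quaternion.coe_commutes c₁, Quaternion.coe_commutes c₂,
        Quaternion.coe_commutes c₃, Quaternion.coe_commutes c₄]
      abel
    rw [h3, h2]
  by_cases him : z.im = 0
  · have hxr : x = ((z.re : ℝ) : Hq) := by
      rw [hxdef] ; ext
      · rfl
      · exact him
      · rfl
      · rfl
    refine ⟨x, ?_⟩
    have key := real_eval_sq a₀ a₁ a₂ z.re
    rw [← hxr] at key
    rw [← hc₀, ← hc₁, ← hc₂, ← hc₃, ← hc₄] at key
    have hw : (a₀ + x*a₁ + x^2*a₂) * star (a₀ + x*a₁ + x^2*a₂) = 0 := by rw [key, hT]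
    rw [Quaternion.self_mul_star] at hw
    rw [← Quaternion.coe_zero] at hw
    exact Quaternion.normSq_eq_zero.1 (Quaternion.coe_injective hw)
  · have hxi : x.imI ≠ 0 := him
    rw [lk_id] at hT
    set L : ℝ := c₁ + 2*x.re*c₂ + (4*x.re^2 - normSq x)*c₃
      + (8*x.re^3 - 4*x.re*normSq x)*c₄ with hL
    set K : ℝ := c₀ - normSq x*c₂ - 2*x.re*normSq x*c₃
      + (normSq x^2 - 4*x.re^2*normSq x)*c₄ with hK
    have hL0 : L = 0 := by
      have := congrArg QuaternionAlgebra.imI hT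
      simp [Quaternion.imI_mul] at this
      rcases this with h | h
      · exact absurd h hxi
      · exact h
    have hK0 : K = 0 := by
      have := congrArg QuaternionAlgebra.re hT
      simp [Quaternion.re_mul, hL0] at this
      exact this
    set s : ℝ := x.re with hs
    set m : ℝ := normSq x with hm
    set d₁ : Hq := a₁ + ((2*s : ℝ):Hq)*a₂ with hd₁
    set d₀ : Hq := a₀ - ((m : ℝ):Hq)*a₂ with hd₀
    have hLd : 2*((d₁ * star d₀).re) + 2*s*normSq d₁ = 0 := by
      rw [hd₁, hd₀, ← L_id]
      rw [hL, hc₁, hc₂, hc₃, hc₄] at hL0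
      linarith [hL0]
    have hKd : normSq d₀ - m*normSq d₁ = 0 := by
      rw [hd₁, hd₀, ← K_id]
      rw [hK, hc₀, hc₂, hc₃, hc₄] at hK0
      linarith [hK0]
    by_cases hd : d₁ = 0
    · refine ⟨x, ?_⟩
      have hy : x^2 = x * ((2*s : ℝ):Hq) - ((m : ℝ):Hq) := by
        rw [sq_self x, hs, hm]
      rw [eval_via_d a₀ a₁ a₂ x s m hy, ← hd₁, ← hd₀, hd]
      have : normSq d₀ = 0 := by rw [hd] at hKd ; simpa using hKd
      rw [Quaternion.normSq_eq_zero.1 this]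
      simp
    · have hnsd₁ : normSq d₁ ≠ 0 := Quaternion.normSq_ne_zero.2 hd
      have ht' : (d₁ * star d₀).re = -(s * normSq d₁) := by linarith
      have hnd : normSq d₀ = m * normSq d₁ := by linarith
      have hre : (-(d₀ * d₁⁻¹)).re = s := by
        rw [Quaternion.inv_def]
        have h1 : (d₀ * ((normSq d₁)⁻¹ • star d₁)).re
            = (normSq d₁)⁻¹ * (d₀ * star d₁).re := by
          rw [mul_smul_comm] ; simp
        have h2 := re_mul_star_comm d₀ d₁
        simp only [Quaternion.re_neg, h1, h2, ht']
        field_simp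
      have hns : normSq (-(d₀ * d₁⁻¹)) = m := by
        rw [normSq_neg, map_mul, map_inv₀, hnd]
        field_simp
      refine ⟨-(d₀ * d₁⁻¹), ?_⟩
      have hy : (-(d₀ * d₁⁻¹))^2 = (-(d₀ * d₁⁻¹)) * ((2*s : ℝ):Hq) - ((m : ℝ):Hq) := by
        rw [sq_self, hre, hns]
      rw [eval_via_d a₀ a₁ a₂ _ s m hy, ← hd₁, ← hd₀]
      rw [neg_mul, mul_assoc, inv_mul_cancel₀ hd, mul_one]
      simp

lemma hc3_id (α β a₂ : Hq) :
    2*((-(α+β)*a₂) * star a₂).re = -(normSq a₂*(2*α.re + 2*β.re)) := by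
  simp [Quaternion.normSq_def', Quaternion.re_mul, Quaternion.imI_mul, Quaternion.imJ_mul,
    Quaternion.imK_mul]
  ring

lemma hc2_id (α β a₂ : Hq) :
    2*((α*β*a₂) * star a₂).re + normSq (-(α+β)*a₂)
      = normSq a₂*(normSq α + normSq β + (2*α.re)*(2*β.re)) := by
  simp [Quaternion.normSq_def', Quaternion.re_mul, Quaternion.imI_mul, Quaternion.imJ_mul,
    Quaternion.imK_mul]
  ring

lemma hc1_id (α β a₂ : Hq) :
    2*((α*β*a₂) * star (-(α+β)*a₂)).re
      = -(normSq a₂*((2*α.re)*normSq β + (2*β.re)*normSq α)) := by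
  simp [Quaternion.normSq_def', Quaternion.re_mul, Quaternion.imI_mul, Quaternion.imJ_mul,
    Quaternion.imK_mul]
  ring

lemma hc0_id (α β a₂ : Hq) :
    normSq (α*β*a₂) = normSq a₂*(normSq α*normSq β) := by
  rw [map_mul, map_mul] ; ring

end GLAux

theorem stmt0 (P : Hq[X]) (hP : P.natDegree = 2) :
    ∃ x₁ x₂ : Hq,
      VQ (normalPoly P) = sphereOf x₁ ∪ sphereOf x₂ ∧
      VQ (derivative P) ⊆
        {y | ∃ y₁ ∈ sphereOf x₁, ∃ y₂ ∈ sphereOf x₂, y = (y₁ + y₂) / 2} := by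
  have hP0 : P ≠ 0 := fun h => by simp [h] at hP
  obtain ⟨a₀, a₁, a₂, hPm, ha₂⟩ :
      ∃ a₀ a₁ a₂ : Hq, (P = monomial 0 a₀ + monomial 1 a₁ + monomial 2 a₂) ∧ a₂ ≠ 0 := by
    refine ⟨P.coeff 0, P.coeff 1, P.coeff 2, ?_, ?_⟩
    · conv_lhs => rw [Polynomial.as_sum_range' P 3 (by rw [hP] ; norm_num)]
      rw [Finset.sum_range_succ, Finset.sum_range_succ, Finset.sum_range_succ,
        Finset.sum_range_zero, zero_add]
    · have h := Polynomial.leadingCoeff_ne_zero.2 hP0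
      rwa [Polynomial.leadingCoeff, hP] at h
  obtain ⟨α, hα⟩ := GLAux.exists_root a₀ a₁ a₂ ha₂
  set β : Hq := -(a₁ * a₂⁻¹) - α with hβd
  have hA : a₁ = -(α + β) * a₂ := by
    rw [hβd]
    have e : -(α + (-(a₁ * a₂⁻¹) - α)) = a₁ * a₂⁻¹ := by abel
    rw [e, mul_assoc, inv_mul_cancel₀ ha₂, mul_one]
  have hB : a₀ = α * β * a₂ := by
    rw [hβd]
    have e : α * (-(a₁ * a₂⁻¹) - α) * a₂
        = -(α * (a₁ * (a₂⁻¹ * a₂))) - α ^ 2 * a₂ := by noncomm_ring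
    rw [e, inv_mul_cancel₀ ha₂, mul_one]
    have h0 : a₀ + (α * a₁ + α ^ 2 * a₂) = 0 := by rw [← hα] ; abel
    have h1 := add_eq_zero_iff_eq_neg.mp h0
    rw [h1] ; abel
  have e0 : Quaternion.normSq a₀ = Quaternion.normSq a₂*(Quaternion.normSq α*Quaternion.normSq β) := by
    rw [hB] ; exact GLAux.hc0_id α β a₂
  have e1 : 2*(a₀*star a₁).re
      = -(Quaternion.normSq a₂*((2*α.re)*Quaternion.normSq β + (2*β.re)*Quaternion.normSq α)) := by
    rw [hB, hA] ; exact GLAux.hc1_id α β a₂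
  have e2 : 2*(a₀*star a₂).re + Quaternion.normSq a₁
      = Quaternion.normSq a₂*(Quaternion.normSq α + Quaternion.normSq β + (2*α.re)*(2*β.re)) := by
    rw [hB, hA] ; exact GLAux.hc2_id α β a₂
  have e3 : 2*(a₁*star a₂).re = -(Quaternion.normSq a₂*(2*α.re + 2*β.re)) := by
    rw [hA] ; exact GLAux.hc3_id α β a₂
  refine ⟨α, β, ?_, ?_⟩
  · ext x
    simp only [VQ, Set.mem_setOf_eq, Set.mem_union]
    rw [hPm, GLAux.evalQ_normal, e0, e1, e2, e3, GLAux.comb_id]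
    have hr : ((Quaternion.normSq a₂ : ℝ) : Hq) ≠ 0 := by
      rw [← Quaternion.coe_zero]
      intro h
      exact Quaternion.normSq_ne_zero.2 ha₂ (Quaternion.coe_injective h)
    constructor
    · intro h
      rcases mul_eq_zero.mp h with h' | h'
      · rcases mul_eq_zero.mp h' with h'' | h''
        · exact Or.inl ((GLAux.qev_eq_zero_iff α x).mp h'')
        · exact Or.inr ((GLAux.qev_eq_zero_iff β x).mp h'')
      · exact absurd h' hr
    · intro h
      rcases h with h | h
      · have h' := (GLAux.qev_eq_zero_iff α x).mpr h
        rw [h', zero_mul, zero_mul]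
      · have h' := (GLAux.qev_eq_zero_iff β x).mpr h
        rw [h', mul_zero, zero_mul]
  · intro y hy
    simp only [VQ, Set.mem_setOf_eq] at hy
    rw [hPm] at hy
    have hder : derivative (monomial 0 a₀ + monomial 1 a₁ + monomial 2 a₂ : Hq[X])
        = monomial 0 a₁ + monomial 1 (a₂*2) := by
      rw [derivative_add, derivative_add, Polynomial.derivative_monomial,
        Polynomial.derivative_monomial, Polynomial.derivative_monomial]
      simp
    rw [hder, GLAux.evalQ_add, GLAux.evalQ_monomial, GLAux.evalQ_monomial] at hy
    simp only [pow_zero, one_mul, pow_one] at hy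
    have h2 : (a₂ * 2 : Hq) ≠ 0 := by
      refine mul_ne_zero ha₂ ?_
      rw [show (2:Hq) = ((2:ℝ):Hq) by norm_cast, ← Quaternion.coe_zero]
      exact fun h => (by norm_num : (2:ℝ) ≠ 0) (Quaternion.coe_injective h)
    have hy2 : y * (a₂*2) = (α+β)*a₂ := by
      have hn := add_eq_zero_iff_neg_eq.mp hy
      rw [hA] at hn
      rw [← hn, neg_mul, neg_neg]
    have hyv : y = (α+β) * a₂ * (a₂*2)⁻¹ := by
      rw [eq_mul_inv_iff_mul_eq₀ h2]
      exact hy2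
    have h2c : (2 : Hq) = ((2:ℝ) : Hq) := by norm_cast
    have hfin : (α+β) * a₂ * (a₂*2)⁻¹ = (α+β)/2 := by
      rw [mul_inv_rev, mul_assoc, ← mul_assoc a₂]
      rw [h2c, ← Quaternion.coe_inv, ← Quaternion.coe_commutes, Quaternion.coe_inv, ← h2c]
      rw [mul_assoc, mul_inv_cancel₀ ha₂, mul_one, div_eq_mul_inv]
    refine ⟨α, ⟨1, one_ne_zero, by simp⟩, β, ⟨1, one_ne_zero, by simp⟩, ?_⟩
    rw [hyv, hfin]

end
end

section
/- Let P ∈ ℍ[X] have degree d ≥ 3. Suppose that N(P)(X) = X^{2e}·(X²+1)^{d−e} for some integer e < d, and that N(P')(X) = ∑_{k=0}^{2d−2} X^k b_k contains exactly one monomial of odd degree (b_k ≠ 0 for exactly one odd index k). Then P is not a Gauss-Lucas polynomial; that is, V(P') is not contained in K(N(P)). -/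
open Polynomial
open scoped Classical RealInnerProductSpace ENNReal

noncomputable section

-- chunk 1 : evalQ basics
namespace QGL
open Quaternion

lemma evalQ_zero (x : Hq) : evalQ 0 x = 0 := by simp [evalQ]

lemma evalQ_add (p q : Hq[X]) (x : Hq) : evalQ (p + q) x = evalQ p x + evalQ q x :=
  Polynomial.sum_add_index p q _ (fun _ => mul_zero _) (fun _ _ _ => mul_add _ _ _)

def evalQHom (x : Hq) : Hq[X] →+ Hq where
  toFun p := evalQ p x
  map_zero' := evalQ_zero x
  map_add' p q := evalQ_add p q x

lemma evalQ_monomial (n : ℕ) (a : Hq) (x : Hq) : evalQ (monomial n a) x = x ^ n * a :=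
  Polynomial.sum_monomial_index a _ (mul_zero _)

lemma evalQ_C (a : Hq) (x : Hq) : evalQ (C a) x = a := by
  rw [← monomial_zero_left, evalQ_monomial, pow_zero, one_mul]

lemma evalQ_sum_range' (p : Hq[X]) {n : ℕ} (h : p.natDegree < n) (x : Hq) :
    evalQ p x = ∑ k ∈ Finset.range n, x ^ k * p.coeff k :=
  Polynomial.sum_over_range' p (fun _ => mul_zero _) n h

lemma evalQ_monomial_mul (n : ℕ) (a : Hq) (q : Hq[X]) (x : Hq)
    (h : ∀ m : ℕ, a * x ^ m = x ^ m * a) :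
    evalQ (monomial n a * q) x = x ^ n * (a * evalQ q x) := by
  induction q using Polynomial.induction_on' with
  | add p q hp hq => rw [mul_add, evalQ_add, hp, hq, evalQ_add, mul_add, mul_add]
  | monomial m b =>
      rw [monomial_mul_monomial, evalQ_monomial, evalQ_monomial, pow_add]
      rw [mul_assoc, ← mul_assoc a, h m, mul_assoc]

lemma evalQ_mul_left (p q : Hq[X]) (x : Hq)
    (h : ∀ k (m : ℕ), p.coeff k * x ^ m = x ^ m * p.coeff k) :
    evalQ (p * q) x = evalQ p x * evalQ q x := by
  conv_lhs => rw [p.as_sum_range' (p.natDegree + 1) (lt_add_one _)]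
  rw [Finset.sum_mul]
  show (evalQHom x) _ = _
  rw [map_sum (evalQHom x)]
  have : ∀ k ∈ Finset.range (p.natDegree + 1),
      (evalQHom x) (monomial k (p.coeff k) * q) = (x ^ k * p.coeff k) * evalQ q x := by
    intro k _
    show evalQ (monomial k (p.coeff k) * q) x = _
    rw [evalQ_monomial_mul _ _ _ _ (h k), mul_assoc]
  rw [Finset.sum_congr rfl this, ← Finset.sum_mul, ← evalQ_sum_range' p (lt_add_one _)]

end QGL
namespace QGL
open Quaternion

abbrev σr : ℝ →+* Hq := algebraMap ℝ Hq

lemma sigma_coe (r : ℝ) : σr r = (r : Hq) :=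
  congrFun Quaternion.algebraMap_def r

lemma coeff_conjPoly (p : Hq[X]) (k : ℕ) : (conjPoly p).coeff k = star (p.coeff k) := by
  rw [conjPoly, Polynomial.sum_def, finset_sum_coeff]
  simp only [coeff_C_mul, coeff_X_pow, mul_ite, mul_one, mul_zero]
  rw [Finset.sum_ite_eq p.support k (fun n => star (p.coeff n))]
  by_cases hk : k ∈ p.support
  · rw [if_pos hk]
  · rw [if_neg hk, Polynomial.notMem_support_iff.1 hk, star_zero]

lemma conjPoly_add (p q : Hq[X]) : conjPoly (p + q) = conjPoly p + conjPoly q := by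
  apply Polynomial.ext; intro k
  simp [coeff_conjPoly, star_add]

lemma coe_commute_any (r : ℝ) (y : Hq) : (r : Hq) * y = y * (r : Hq) :=
  Quaternion.coe_commutes r y

lemma map_coeff (u : ℝ[X]) (k : ℕ) : (u.map σr).coeff k = ((u.coeff k : ℝ) : Hq) := by
  rw [Polynomial.coeff_map, sigma_coe]

lemma coe_poly_comm (u : ℝ[X]) (p : Hq[X]) : u.map σr * p = p * u.map σr := by
  apply Polynomial.ext; intro k
  rw [Polynomial.coeff_mul, Polynomial.coeff_mul, ← Finset.Nat.sum_antidiagonal_swap]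
  apply Finset.sum_congr rfl
  intro ij _
  simp only [Prod.fst_swap, Prod.snd_swap]
  rw [map_coeff, coe_commute_any]

lemma conjPoly_map_mul (u : ℝ[X]) (p : Hq[X]) :
    conjPoly (u.map σr * p) = u.map σr * conjPoly p := by
  apply Polynomial.ext; intro k
  rw [coeff_conjPoly, Polynomial.coeff_mul, Polynomial.coeff_mul, star_sum]
  apply Finset.sum_congr rfl
  intro ij _
  rw [map_coeff, star_mul, star_coe, ← coe_commute_any, coeff_conjPoly]

lemma evalQ_map (u : ℝ[X]) (x : Hq) : evalQ (u.map σr) x = aeval x u := by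
  rw [evalQ_sum_range' (u.map σr) (Nat.lt_succ_of_le natDegree_map_le) x,
    aeval_def, Polynomial.eval₂_eq_sum,
    Polynomial.sum_over_range' u (fun n => by simp) (u.natDegree + 1) (lt_add_one _)]
  apply Finset.sum_congr rfl
  intro k _
  rw [map_coeff, sigma_coe, coe_commute_any]

lemma evalQ_coe_mul (u : ℝ[X]) (p : Hq[X]) (x : Hq) :
    evalQ (u.map σr * p) x = (aeval x u) * evalQ p x := by
  rw [evalQ_mul_left, evalQ_map]
  intro k m
  rw [map_coeff, coe_commute_any]

lemma quat_CH (x : Hq) : x ^ 2 = ((2 * x.re : ℝ) : Hq) * x - ((normSq x : ℝ) : Hq) := by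
  have h1 : x * star x = ((normSq x : ℝ) : Hq) := Quaternion.self_mul_star x
  rw [Quaternion.star_eq_two_re_sub, mul_sub, ← coe_commute_any, sub_eq_iff_eq_add] at h1
  rw [sq, eq_sub_iff_add_eq, add_comm, ← h1]

lemma quat_real_of_star {a : Hq} (h : star a = a) : ((a.re : ℝ) : Hq) = a := by
  have hI := congrArg QuaternionAlgebra.imI h
  have hJ := congrArg QuaternionAlgebra.imJ h
  have hK := congrArg QuaternionAlgebra.imK h
  simp only [Quaternion.imI_star, Quaternion.imJ_star, Quaternion.imK_star] at hI hJ hK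
  ext
  · rw [Quaternion.re_coe]
  · rw [Quaternion.imI_coe]; linarith
  · rw [Quaternion.imJ_coe]; linarith
  · rw [Quaternion.imK_coe]; linarith

lemma normal_coeff_star (Q : Hq[X]) (k : ℕ) :
    star ((normalPoly Q).coeff k) = (normalPoly Q).coeff k := by
  rw [normalPoly, Polynomial.coeff_mul, star_sum, ← Finset.Nat.sum_antidiagonal_swap]
  apply Finset.sum_congr rfl
  intro ij _
  simp only [Prod.fst_swap, Prod.snd_swap]
  rw [coeff_conjPoly, coeff_conjPoly, star_mul, star_star]

end QGL
namespace QGL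
open Quaternion

lemma natDegree_conjPoly_le (p : Hq[X]) : (conjPoly p).natDegree ≤ p.natDegree := by
  apply Polynomial.natDegree_le_iff_coeff_eq_zero.2
  intro k hk
  rw [coeff_conjPoly, Polynomial.coeff_eq_zero_of_natDegree_lt hk, star_zero]

lemma evalQ_conjPoly_coe (Q : Hq[X]) (r : ℝ) :
    evalQ (conjPoly Q) (r : Hq) = star (evalQ Q (r : Hq)) := by
  rw [evalQ_sum_range' (conjPoly Q) (Nat.lt_succ_of_le (natDegree_conjPoly_le Q)) _,
      evalQ_sum_range' Q (lt_add_one _) _, star_sum]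
  apply Finset.sum_congr rfl
  intro k _
  rw [coeff_conjPoly, star_mul, ← Quaternion.coe_pow, star_coe, coe_commute_any]

lemma evalQ_linear (c e x : Hq) : evalQ (C c * X + C e) x = x * c + e := by
  rw [evalQ_add, evalQ_C, ← pow_one (X : Hq[X]), Polynomial.C_mul_X_pow_eq_monomial,
    evalQ_monomial, pow_one]

lemma aeval_s0 (a n : ℝ) (x : Hq) (h1 : x.re = a) (h2 : normSq x = n) :
    aeval x (X ^ 2 + C (-(2 * a)) * X + C n : ℝ[X]) = 0 := by
  simp only [map_add, map_mul, map_pow, aeval_X, aeval_C]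
  rw [quat_CH x, h1, h2, sigma_coe, sigma_coe, Quaternion.coe_neg, neg_mul]
  abel

lemma evalQ_lin_mul_lin (c e c' e' z : Hq) :
    evalQ ((C c * X + C e) * (C c' * X + C e')) z =
      z * z * (c * c') + z * (c * e') + (z * (e * c') + e * e') := by
  have h1 : (C c * X + C e : Hq[X]) = monomial 1 c + monomial 0 e := by
    rw [← Polynomial.C_mul_X_pow_eq_monomial, pow_one, Polynomial.monomial_zero_left]
  have h2 : (C c' * X + C e' : Hq[X]) = monomial 1 c' + monomial 0 e' := by
    rw [← Polynomial.C_mul_X_pow_eq_monomial, pow_one, Polynomial.monomial_zero_left]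
  rw [h1, h2, add_mul, mul_add, mul_add]
  rw [evalQ_add, evalQ_add, evalQ_add]
  simp only [Polynomial.monomial_mul_monomial, evalQ_monomial]
  norm_num [pow_succ, pow_zero, pow_one]

lemma normal_root_re (Q : Hq[X]) (hroot : ∀ x : Hq, evalQ Q x = 0 → x.re = 0)
    (z : Hq) (hz : evalQ (normalPoly Q) z = 0) : z.re = 0 := by
  by_cases him : z.imI = 0 ∧ z.imJ = 0 ∧ z.imK = 0
  · -- real case
    have hzr : z = ((z.re : ℝ) : Hq) := by
      ext
      · rw [Quaternion.re_coe]
      · rw [Quaternion.imI_coe, him.1]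
      · rw [Quaternion.imJ_coe, him.2.1]
      · rw [Quaternion.imK_coe, him.2.2]
    have hpow : ∀ m : ℕ, z ^ m = ((z.re ^ m : ℝ) : Hq) := by
      intro m
      conv_lhs => rw [hzr]
      rw [Quaternion.coe_pow]
    have hmul : evalQ (normalPoly Q) z = evalQ Q z * evalQ (conjPoly Q) z := by
      rw [normalPoly]
      apply evalQ_mul_left
      intro k m
      rw [hpow m]
      exact (coe_commute_any _ _).symm
    rw [hmul] at hz
    rw [hzr, evalQ_conjPoly_coe, Quaternion.self_mul_star] at hz
    have h0 : normSq (evalQ Q ((z.re : ℝ) : Hq)) = 0 := by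
      apply Quaternion.coe_injective
      rw [hz, Quaternion.coe_zero]
    have hq0 : evalQ Q ((z.re : ℝ) : Hq) = 0 := Quaternion.normSq_eq_zero.1 h0
    have := hroot _ hq0
    rwa [Quaternion.re_coe] at this
  · -- nonreal case
    set a := z.re with ha
    set n := normSq z with hn
    set s₀ : ℝ[X] := X ^ 2 + C (-(2 * a)) * X + C n with hs₀
    have hm₀ : s₀.Monic := by
      rw [hs₀, add_assoc]
      apply Polynomial.monic_X_pow_add
      calc degree (C (-(2 * a)) * X + C n) ≤ 1 := Polynomial.degree_linear_le
        _ < (2 : ℕ) := by exact_mod_cast one_lt_two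
    have hdeg₀ : s₀.degree = 2 := by
      rw [hs₀, ← one_mul (X ^ 2 : ℝ[X]), ← Polynomial.C_1]
      exact Polynomial.degree_quadratic one_ne_zero
    set s : Hq[X] := s₀.map σr with hs
    have hms : s.Monic := hm₀.map σr
    have hdegs : s.degree = 2 := by
      rw [hs, Polynomial.degree_map_eq_of_leadingCoeff_ne_zero]
      · exact hdeg₀
      · rw [hm₀.leadingCoeff, map_one]; exact one_ne_zero
    set D : Hq[X] := Q /ₘ s with hD
    set E : Hq[X] := Q %ₘ s with hE'
    have hQdec : Q = s * D + E := by
      rw [hD, hE', add_comm]; exact (Polynomial.modByMonic_add_div Q s).symm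
    have hEdeg : E.natDegree ≤ 1 := by
      by_cases hE0 : E = 0
      · rw [hE0, Polynomial.natDegree_zero]; omega
      · have h2 : E.degree < ((2 : ℕ) : WithBot ℕ) := by
          rw [show ((2 : ℕ) : WithBot ℕ) = (2 : WithBot ℕ) by rfl, ← hdegs]
          exact Polynomial.degree_modByMonic_lt Q hms
        have := (Polynomial.natDegree_lt_iff_degree_lt hE0).2 h2
        omega
    obtain ⟨c, e, hE⟩ : ∃ c e : Hq, E = C c * X + C e :=
      ⟨_, _, Polynomial.eq_X_add_C_of_natDegree_le_one hEdeg⟩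
    have hQeval : ∀ x : Hq, evalQ Q x = aeval x s₀ * evalQ D x + (x * c + e) := by
      intro x
      conv_lhs => rw [hQdec]
      rw [evalQ_add, hs, evalQ_coe_mul, hE, evalQ_linear]
    have hEc : conjPoly E = C (star c) * X + C (star e) := by
      apply Polynomial.ext; intro k
      rw [coeff_conjPoly, hE]
      rcases k with _ | _ | k <;>
        simp [Polynomial.coeff_C, Polynomial.coeff_X, Polynomial.coeff_C_mul]
    have hswap : E * (s * conjPoly D) = s * (E * conjPoly D) := by
      rw [hs, ← mul_assoc, ← coe_poly_comm, mul_assoc]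
    have hNdec : normalPoly Q =
        s * (D * (s * conjPoly D) + D * conjPoly E + E * conjPoly D) + E * conjPoly E := by
      rw [normalPoly]
      conv_lhs => rw [hQdec]
      rw [conjPoly_add, hs, conjPoly_map_mul, ← hs]
      rw [add_mul, mul_add, mul_add, hswap, mul_add, mul_add]
      rw [← mul_assoc s D (s * conjPoly D), ← mul_assoc s D (conjPoly E)]
      abel
    have hCH : aeval z s₀ = 0 := by
      rw [hs₀]; exact aeval_s0 a n z ha.symm hn.symm
    have hEEz : evalQ (E * conjPoly E) z = 0 := by
      have h := hz
      rw [hNdec, evalQ_add, hs, evalQ_coe_mul, hCH, zero_mul, zero_add] at h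
      exact h
    have hEE : evalQ (E * conjPoly E) z =
        z * z * ((normSq c : ℝ) : Hq) +
          (z * (((2 * (c * star e).re : ℝ)) : Hq) + ((normSq e : ℝ) : Hq)) := by
      rw [hEc, hE, evalQ_lin_mul_lin]
      rw [Quaternion.self_mul_star, Quaternion.self_mul_star]
      rw [show e * star c = star (c * star e) by rw [star_mul, star_star]]
      have h5 : z * (c * star e) + z * star (c * star e) =
          z * (((2 * (c * star e).re : ℝ)) : Hq) := by
        rw [← mul_add, Quaternion.self_add_star']
      rw [add_assoc, ← add_assoc (z * (c * star e)), h5]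
    rw [hEE] at hEEz
    set tR : ℝ := (c * star e).re with htR
    -- extract components
    have hI := congrArg QuaternionAlgebra.imI hEEz
    have hJ := congrArg QuaternionAlgebra.imJ hEEz
    have hK := congrArg QuaternionAlgebra.imK hEEz
    have hR := congrArg QuaternionAlgebra.re hEEz
    simp only [Quaternion.imI_add, Quaternion.imJ_add, Quaternion.imK_add, Quaternion.re_add,
      Quaternion.imI_mul, Quaternion.imJ_mul, Quaternion.imK_mul, Quaternion.re_mul,
      Quaternion.re_coe, Quaternion.imI_coe, Quaternion.imJ_coe, Quaternion.imK_coe,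
      Quaternion.re_zero, Quaternion.imI_zero, Quaternion.imJ_zero, Quaternion.imK_zero,
      mul_zero, zero_mul, add_zero, zero_add, sub_zero] at hI hJ hK hR
    rw [← ha] at hI hJ hK hR
    have hnz : n = a ^ 2 + z.imI ^ 2 + z.imJ ^ 2 + z.imK ^ 2 := by
      rw [hn, Quaternion.normSq_def', ← ha]
    have himne : z.imI ≠ 0 ∨ z.imJ ≠ 0 ∨ z.imK ≠ 0 := by tauto
    have hu : 2 * a * normSq c + 2 * tR = 0 := by
      rcases himne with h | h | h
      · have h2 : (2 * a * normSq c + 2 * tR) * z.imI = 0 := by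
          linear_combination hI
        exact (mul_eq_zero.1 h2).resolve_right h
      · have h2 : (2 * a * normSq c + 2 * tR) * z.imJ = 0 := by
          linear_combination hJ
        exact (mul_eq_zero.1 h2).resolve_right h
      · have h2 : (2 * a * normSq c + 2 * tR) * z.imK = 0 := by
          linear_combination hK
        exact (mul_eq_zero.1 h2).resolve_right h
    have hη : normSq e = normSq c * n := by
      linear_combination hR - a * hu - normSq c * hnz
    by_cases hc : c = 0
    · have he0 : e = 0 := by
        apply Quaternion.normSq_eq_zero.1
        rw [hη, hc, map_zero, zero_mul]
      have hQz : evalQ Q z = 0 := by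
        rw [hQeval z, hCH, zero_mul, zero_add, hc, he0, mul_zero, add_zero]
      exact hroot z hQz
    · set x : Hq := -(e * c⁻¹) with hx
      have hγne : normSq c ≠ 0 := Quaternion.normSq_ne_zero.2 hc
      have hcinv : c⁻¹ = (normSq c)⁻¹ • star c := rfl
      have hxre : x.re = a := by
        rw [hx, Quaternion.re_neg, hcinv, mul_smul_comm, Quaternion.re_smul, smul_eq_mul]
        have h6 : (e * star c).re = (c * star e).re := by
          rw [show e * star c = star (c * star e) by rw [star_mul, star_star],
            Quaternion.re_star]
        rw [h6, ← htR]
        have hρval : tR = -(a * normSq c) := by linarith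
        rw [hρval]
        field_simp
      have hxnorm : normSq x = n := by
        rw [hx, Quaternion.normSq_neg, map_mul, map_inv₀, hη]
        field_simp
      have hCHx : aeval x s₀ = 0 := by
        rw [hs₀]; exact aeval_s0 a n x hxre hxnorm
      have hxroot : evalQ Q x = 0 := by
        rw [hQeval x, hCHx, zero_mul, zero_add, hx, neg_mul, mul_assoc,
          inv_mul_cancel₀ hc, mul_one, neg_add_cancel]
      have := hroot x hxroot
      rw [hxre] at this
      exact this

end QGL
namespace QGL
open Quaternion

lemma coeff_comp_neg_X (p : ℂ[X]) (k : ℕ) :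
    (p.comp (-X)).coeff k = (-1) ^ k * p.coeff k := by
  induction p using Polynomial.induction_on' with
  | add p q hp hq =>
      rw [Polynomial.add_comp, Polynomial.coeff_add, hp, hq, Polynomial.coeff_add, mul_add]
  | monomial n b =>
      rw [Polynomial.monomial_comp, neg_pow, ← mul_assoc, mul_comm (C b) ((-1 : ℂ[X]) ^ n),
        mul_assoc, Polynomial.C_mul_X_pow_eq_monomial]
      rw [show ((-1 : ℂ[X]) ^ n) = C ((-1 : ℂ) ^ n) by rw [map_pow, map_neg, map_one]]
      rw [Polynomial.coeff_C_mul, Polynomial.coeff_monomial]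
      rcases eq_or_ne n k with h | h
      · subst h; simp
      · simp [h]

lemma even_poly_odd_coeff_zero (q : ℂ[X]) (hq0 : q ≠ 0) (hconjmap : q.map (starRingEnd ℂ) = q)
    (hroots : ∀ w : ℂ, q.IsRoot w → w.re = 0) (heven : Even q.natDegree)
    {k : ℕ} (hk : Odd k) : q.coeff k = 0 := by
  have hsp : q.Splits := IsAlgClosed.splits q
  have hcard : Multiset.card q.roots = q.natDegree := (Polynomial.splits_iff_card_roots).1 hsp
  have hfact := Polynomial.C_leadingCoeff_mul_prod_multiset_X_sub_C hcard
  have hconj : q.roots.map (starRingEnd ℂ) = q.roots := by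
    have h := hsp.roots_map (starRingEnd ℂ)
    rw [hconjmap] at h
    exact h.symm
  have hneg : q.roots.map (fun w => -w) = q.roots := by
    conv_rhs => rw [← hconj]
    apply Multiset.map_congr rfl
    intro w hw
    have hre := hroots w (Polynomial.mem_roots'.1 hw).2
    simp [Complex.ext_iff, hre]
  have hcomp : q.comp (-X) = q := by
    conv_lhs => rw [← hfact]
    rw [Polynomial.mul_comp, Polynomial.C_comp, Polynomial.multiset_prod_comp,
      Multiset.map_map]
    rw [Multiset.map_congr rfl (fun w _ => show ((fun p : ℂ[X] => p.comp (-X)) ∘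
        (fun w : ℂ => X - C w)) w = -(X - C (-w)) by
      simp only [Function.comp_apply, Polynomial.sub_comp, Polynomial.X_comp,
        Polynomial.C_comp, map_neg]
      ring)]
    rw [show (fun w : ℂ => -(X - C (-w))) =
        (Neg.neg ∘ ((fun w : ℂ => X - C w) ∘ Neg.neg)) from funext fun w => rfl]
    rw [← Multiset.map_map Neg.neg, ← Multiset.map_map (fun w : ℂ => X - C w), hneg,
      Multiset.prod_map_neg, Multiset.card_map, hcard, Even.neg_one_pow heven, one_mul, hfact]
  have hk0 := coeff_comp_neg_X q k
  rw [hcomp, Odd.neg_one_pow hk, neg_one_mul] at hk0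
  have h2 : (2 : ℂ) * q.coeff k = 0 := by linear_combination hk0
  simpa [two_ne_zero] using mul_eq_zero.1 h2

def iotaC : ℂ →+* Hq where
  toFun w := ⟨w.re, w.im, 0, 0⟩
  map_one' := by apply Quaternion.ext <;> simp
  map_mul' w v := by
    show (⟨(w*v).re, (w*v).im, 0, 0⟩ : Hq) = (⟨w.re, w.im, 0, 0⟩ : Hq) * ⟨v.re, v.im, 0, 0⟩
    apply Quaternion.ext <;>
      simp [Quaternion.re_mul, Quaternion.imI_mul, Quaternion.imJ_mul, Quaternion.imK_mul,
        Complex.mul_re, Complex.mul_im, sub_eq_add_neg]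
  map_zero' := by apply Quaternion.ext <;> simp
  map_add' w v := by
    show (⟨(w+v).re, (w+v).im, 0, 0⟩ : Hq) = (⟨w.re, w.im, 0, 0⟩ : Hq) + ⟨v.re, v.im, 0, 0⟩
    apply Quaternion.ext <;> simp

lemma iota_algebraMap : (iotaC).comp (algebraMap ℝ ℂ) = σr := by
  apply RingHom.ext; intro r
  rw [show σr r = (r : Hq) from sigma_coe r]
  show (⟨(r : ℂ).re, (r : ℂ).im, 0, 0⟩ : Hq) = (r : Hq)
  apply Quaternion.ext <;> simp [iotaC, Quaternion.re_coe, Quaternion.imI_coe,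
    Quaternion.imJ_coe, Quaternion.imK_coe]

lemma aeval_iota (u : ℝ[X]) (w : ℂ) : aeval (iotaC w) u = iotaC (aeval w u) := by
  rw [aeval_def, aeval_def, Polynomial.hom_eval₂, iota_algebraMap]

def realify (p : Hq[X]) : ℝ[X] :=
  ∑ k ∈ Finset.range (p.natDegree + 1), Polynomial.C ((p.coeff k).re) * X ^ k

lemma coeff_realify (p : Hq[X]) (k : ℕ) : (realify p).coeff k = (p.coeff k).re := by
  rw [realify, Polynomial.finset_sum_coeff]
  simp only [Polynomial.coeff_C_mul, Polynomial.coeff_X_pow, mul_ite, mul_one, mul_zero]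
  rw [Finset.sum_ite_eq (Finset.range (p.natDegree + 1)) k _]
  by_cases hk : k ∈ Finset.range (p.natDegree + 1)
  · rw [if_pos hk]
  · rw [if_neg hk]
    rw [Finset.mem_range, not_lt] at hk
    rw [Polynomial.coeff_eq_zero_of_natDegree_lt (by omega), Quaternion.re_zero]

lemma map_realify {p : Hq[X]} (h : ∀ k, star (p.coeff k) = p.coeff k) :
    (realify p).map σr = p := by
  apply Polynomial.ext; intro k
  rw [Polynomial.coeff_map, coeff_realify, sigma_coe, quat_real_of_star (h k)]

end QGL

theorem stmt4 (d e : ℕ) (hd : 3 ≤ d) (P : Hq[X]) (hdeg : P.natDegree = d)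
    (he : e < d)
    (hN : normalPoly P = X ^ (2 * e) * (X ^ 2 + 1) ^ (d - e))
    (hodd : ∃! k, Odd k ∧ (normalPoly (derivative P)).coeff k ≠ 0) :
    ¬ GaussLucas P := by
  intro hGL
  set Q : Hq[X] := derivative P with hQ
  -- Step 1 : every root of Q has zero real part
  have hreal_set : VQ (normalPoly P) ⊆ {x : Hq | x.re = 0} := by
    intro y hy
    have hy' : evalQ (normalPoly P) y = 0 := hy
    rw [hN] at hy'
    have hmap : ((X ^ (2 * e) * (X ^ 2 + 1) ^ (d - e) : ℝ[X]).map QGL.σr) =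
        (X ^ (2 * e) * (X ^ 2 + 1) ^ (d - e) : Hq[X]) := by
      simp [Polynomial.map_mul, Polynomial.map_pow, Polynomial.map_add, Polynomial.map_one,
        Polynomial.map_X]
    rw [← hmap, QGL.evalQ_map] at hy'
    simp only [map_mul, map_pow, map_add, aeval_X, map_one] at hy'
    rcases mul_eq_zero.1 hy' with h | h
    · have hy0 : y = 0 := (pow_eq_zero_iff'.1 h).1
      show y.re = 0
      rw [hy0, Quaternion.re_zero]
    · have h2 : y ^ 2 + 1 = 0 := (pow_eq_zero_iff'.1 h).1
      have h3 : y ^ 2 = -1 := eq_neg_of_add_eq_zero_left h2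
      have h4 : Quaternion.normSq y ^ 2 = 1 := by
        have h5 := congrArg Quaternion.normSq h3
        rw [map_pow] at h5
        simpa using h5
      have h5 : Quaternion.normSq y = 1 := by
        nlinarith [h4, Quaternion.normSq_nonneg (a := y)]
      have h6 : y ^ 2 = -((Quaternion.normSq y : ℝ) : Hq) := by
        rw [h5, h3]
        simp
      exact Quaternion.sq_eq_neg_normSq.1 h6
  have hconv : convexHull ℝ (VQ (normalPoly P)) ⊆ {x : Hq | x.re = 0} := by
    apply convexHull_min hreal_set
    intro u hu v hv α β hα hβ hs
    have hu' : u.re = 0 := hu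
    have hv' : v.re = 0 := hv
    show (α • u + β • v).re = 0
    rw [Quaternion.re_add, Quaternion.re_smul, Quaternion.re_smul, hu', hv']
    simp
  have hroot : ∀ x : Hq, evalQ Q x = 0 → x.re = 0 := fun x hx =>
    hconv (hGL (show x ∈ VQ (derivative P) from hx))
  -- Step 2 : degrees
  have hPne : P ≠ 0 := by
    intro h
    rw [h, Polynomial.natDegree_zero] at hdeg
    omega
  have hlead : P.coeff d ≠ 0 := by
    rw [← hdeg, ← Polynomial.leadingCoeff]
    exact Polynomial.leadingCoeff_ne_zero.2 hPne
  have hQd : Q.coeff (d - 1) ≠ 0 := by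
    rw [hQ, Polynomial.coeff_derivative, show d - 1 + 1 = d by omega]
    apply mul_ne_zero hlead
    have hcast : ((d - 1 : ℕ) : Hq) + 1 = (((d : ℕ) : ℝ) : Hq) := by
      rw [← Nat.cast_add_one, show d - 1 + 1 = d by omega, ← map_natCast (algebraMap ℝ Hq) d,
        QGL.sigma_coe]
    rw [hcast]
    intro hzero
    have : ((d : ℕ) : ℝ) = 0 := by
      apply Quaternion.coe_injective
      rw [hzero, Quaternion.coe_zero]
    have : (d : ℝ) ≠ 0 := by positivity
    simp_all
  have hQne : Q ≠ 0 := by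
    intro h0
    apply hQd
    rw [h0, Polynomial.coeff_zero]
  have hQlead : Q.leadingCoeff ≠ 0 := Polynomial.leadingCoeff_ne_zero.2 hQne
  set m : ℕ := Q.natDegree with hm
  have hcle : (conjPoly Q).natDegree = m := by
    apply le_antisymm (QGL.natDegree_conjPoly_le Q)
    apply Polynomial.le_natDegree_of_ne_zero
    rw [QGL.coeff_conjPoly]
    exact star_ne_zero.2 hQlead
  have hclead : (conjPoly Q).leadingCoeff = star Q.leadingCoeff := by
    rw [Polynomial.leadingCoeff, hcle, QGL.coeff_conjPoly, Polynomial.coeff_natDegree]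
  have hlcc : Q.leadingCoeff * (conjPoly Q).leadingCoeff ≠ 0 := by
    rw [hclead, Quaternion.self_mul_star]
    intro h
    apply Quaternion.normSq_ne_zero.2 hQlead
    apply Quaternion.coe_injective
    rw [h, Quaternion.coe_zero]
  have hNQdeg : (normalPoly Q).natDegree = m + m := by
    rw [normalPoly, Polynomial.natDegree_mul' hlcc, hcle]
  have hNQne : normalPoly Q ≠ 0 := by
    intro h
    apply hlcc
    rw [← Polynomial.leadingCoeff_mul' hlcc, ← normalPoly, h, Polynomial.leadingCoeff_zero]
  -- Step 3 : realification
  set R₁ : ℝ[X] := QGL.realify (normalPoly Q) with hR₁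
  have hmapR : R₁.map QGL.σr = normalPoly Q := QGL.map_realify (QGL.normal_coeff_star Q)
  have hR₁ne : R₁ ≠ 0 := by
    intro h
    apply hNQne
    rw [← hmapR, h, Polynomial.map_zero]
  have hR₁deg : R₁.natDegree = (normalPoly Q).natDegree := by
    rw [← hmapR, Polynomial.natDegree_map_eq_of_injective Quaternion.algebraMap_injective]
  set Rc : ℂ[X] := R₁.map (algebraMap ℝ ℂ) with hRc
  have hRcne : Rc ≠ 0 := by
    intro h
    exact hR₁ne ((Polynomial.map_eq_zero_iff (algebraMap ℝ ℂ).injective).1 h)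
  have hRcdeg : Rc.natDegree = m + m := by
    rw [hRc, Polynomial.natDegree_map_eq_of_injective (algebraMap ℝ ℂ).injective, hR₁deg,
      hNQdeg]
  have heven : Even Rc.natDegree := by
    rw [hRcdeg]
    exact ⟨m, rfl⟩
  have hconjRc : Rc.map (starRingEnd ℂ) = Rc := by
    rw [hRc, Polynomial.map_map]
    congr 1
    apply RingHom.ext
    intro r
    simp [Complex.conj_ofReal]
  have hrootsRc : ∀ w : ℂ, Rc.IsRoot w → w.re = 0 := by
    intro w hw
    have haw : aeval w R₁ = 0 := by
      rw [aeval_def, ← Polynomial.eval_map, ← hRc]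
      exact hw
    have hz : evalQ (normalPoly Q) (QGL.iotaC w) = 0 := by
      rw [← hmapR, QGL.evalQ_map, QGL.aeval_iota, haw, map_zero]
    exact QGL.normal_root_re Q hroot (QGL.iotaC w) hz
  -- Step 4 : contradiction with the odd coefficient
  obtain ⟨k, ⟨hkodd, hkne⟩, -⟩ := hodd
  apply hkne
  have hcoeffRc : Rc.coeff k = 0 :=
    QGL.even_poly_odd_coeff_zero Rc hRcne hconjRc hrootsRc heven hkodd
  have hcoeffR₁ : R₁.coeff k = 0 := by
    apply (algebraMap ℝ ℂ).injective
    rw [map_zero, ← Polynomial.coeff_map, ← hRc, hcoeffRc]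
  show (normalPoly Q).coeff k = 0
  rw [← hmapR, Polynomial.coeff_map, hcoeffR₁, map_zero]


end
end

section
/- Let R ∈ ℍ[X] be a nonconstant polynomial with real coefficients which contains exactly one monomial of odd degree with nonzero coefficient. Then the intersection of the quaternionic zero set V(R) with the imaginary space Im(ℍ) = {x ∈ ℍ : Re(x) = 0} is contained in {0}. -/
open Polynomial
open scoped Classical RealInnerProductSpace ENNReal

noncomputable section

theorem stmt5 (R : Hq[X]) (hreal : ∀ k, ∃ r : ℝ, R.coeff k = algebraMap ℝ Hq r)
    (hnc : 0 < R.natDegree)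
    (hodd : ∃! k, Odd k ∧ R.coeff k ≠ 0) :
    VQ R ∩ {x : Hq | x.re = 0} ⊆ {0} := by
  rintro x ⟨hx, hxre⟩
  simp only [VQ, evalQ, Set.mem_setOf_eq] at hx hxre
  choose r hr using hreal
  set c : ℝ := -(Quaternion.normSq x) with hc
  have hcoe : ∀ t : ℝ, algebraMap ℝ Hq t = (t : Hq) := fun _ => rfl
  have hstar : star x = -x := by ext <;> simp [hxre]
  have hx2 : x ^ 2 = algebraMap ℝ Hq c := by
    have h := Quaternion.self_mul_star x
    rw [hstar, mul_neg] at h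
    calc x ^ 2 = -(-(x * x)) := by rw [sq, neg_neg]
      _ = algebraMap ℝ Hq c := by rw [h, hc, map_neg]; rfl
  have hxp : ∀ m : ℕ, x ^ (2 * m) = algebraMap ℝ Hq (c ^ m) := by
    intro m; rw [pow_mul, hx2, ← map_pow]
  set N := R.natDegree + 1 with hN
  set A : ℝ := ∑ k ∈ Finset.range N, (if Even k then c ^ (k / 2) * r k else 0) with hA
  set B : ℝ := ∑ k ∈ Finset.range N, (if Even k then 0 else c ^ (k / 2) * r k) with hB
  have key : ∀ k : ℕ, x ^ k * R.coeff k =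
      algebraMap ℝ Hq (if Even k then c ^ (k / 2) * r k else 0)
      + (if Even k then 0 else c ^ (k / 2) * r k) • x := by
    intro k
    rcases Nat.even_or_odd k with he | ho
    · obtain ⟨m, hm⟩ := he
      have hk : k = 2 * m := by omega
      have hdiv : k / 2 = m := by omega
      have hpow : x ^ k = algebraMap ℝ Hq (c ^ (k / 2)) := by
        rw [hdiv, hk, hxp]
      rw [if_pos ⟨m, hm⟩, if_pos ⟨m, hm⟩, zero_smul, add_zero, hpow, hr, ← map_mul]
    · obtain ⟨m, hm⟩ := ho
      have hne : ¬ Even k := by simp [Nat.even_iff]; omega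
      have hdiv : k / 2 = m := by omega
      have hk : k = 2 * m + 1 := by omega
      have hpow : x ^ k = algebraMap ℝ Hq (c ^ m) * x := by
        rw [hk, pow_succ, hxp]
      rw [if_neg hne, if_neg hne, map_zero, zero_add, hpow, hr, hdiv, mul_assoc,
        ← Algebra.commutes (r k) x, ← mul_assoc, ← map_mul, ← Algebra.smul_def]
  have hsum : (algebraMap ℝ Hq A) + B • x = 0 := by
    have h1 : R.sum (fun k a => x ^ k * a) = ∑ k ∈ Finset.range N, x ^ k * R.coeff k :=
      R.sum_over_range fun n => mul_zero _
    rw [← hx, h1, hA, hB, map_sum, Finset.sum_smul, ← Finset.sum_add_distrib]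
    exact Finset.sum_congr rfl fun k _ => (key k).symm
  have hA0 : A = 0 := by
    have := congrArg QuaternionAlgebra.re hsum
    simpa [Quaternion.re_add, Quaternion.re_smul, Quaternion.re_zero, hcoe, hxre] using this
  have hBx : B • x = 0 := by
    rw [hA0, map_zero, zero_add] at hsum; exact hsum
  rcases smul_eq_zero.mp hBx with hB0 | h0
  · -- B = 0 forces x = 0 via the unique odd coefficient
    obtain ⟨k0, ⟨hk0odd, hk0ne⟩, huniq⟩ := hodd
    have hk0mem : k0 ∈ Finset.range N := by
      rw [Finset.mem_range, hN]
      exact Nat.lt_succ_of_le (Polynomial.le_natDegree_of_ne_zero hk0ne)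
    have hk0even : ¬ Even k0 := by simpa using hk0odd
    have hBval : B = c ^ (k0 / 2) * r k0 := by
      rw [hB]
      rw [Finset.sum_eq_single k0]
      · rw [if_neg hk0even]
      · intro b _ hbne
        by_cases hbe : Even b
        · rw [if_pos hbe]
        · rw [if_neg hbe]
          have hb0 : R.coeff b = 0 := by
            by_contra hb
            exact hbne (huniq b ⟨Nat.not_even_iff_odd.mp hbe, hb⟩)
          have : algebraMap ℝ Hq (r b) = algebraMap ℝ Hq 0 := by
            rw [← hr, hb0, map_zero]
          have hrb : r b = 0 := Quaternion.coe_injective this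
          rw [hrb, mul_zero]
      · intro habs; exact absurd hk0mem habs
    have hrk0 : r k0 ≠ 0 := by
      intro h
      apply hk0ne
      rw [hr, h, map_zero]
    have hcpow : c ^ (k0 / 2) = 0 := by
      rcases mul_eq_zero.mp (hBval ▸ hB0) with h | h
      · exact h
      · exact absurd h hrk0
    have hc0 : c = 0 := (pow_eq_zero_iff'.mp hcpow).1
    have : Quaternion.normSq x = 0 := by
      have := hc0; rw [hc] at this; linarith [neg_eq_zero.mp this]
    exact Quaternion.normSq_eq_zero.mp this
  · exact h0

end
end

section
/- Let d ≥ 3 and let P(X) = X^{d−3}·(X−i)·(X−j)·(X−k) ∈ ℍ[X], where i, j, k are the standard quaternionic imaginary units. Then P is not a Gauss-Lucas polynomial; that is, V(P') is not contained in K(N(P)). -/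
open Polynomial
open scoped Classical RealInnerProductSpace ENNReal

noncomputable section

@[simp] lemma Hq_zero_re : (0:Hq).re = 0 := rfl
@[simp] lemma Hq_zero_imI : (0:Hq).imI = 0 := rfl
@[simp] lemma Hq_zero_imJ : (0:Hq).imJ = 0 := rfl
@[simp] lemma Hq_zero_imK : (0:Hq).imK = 0 := rfl
@[simp] lemma Hq_one_re : (1:Hq).re = 1 := rfl
@[simp] lemma Hq_one_imI : (1:Hq).imI = 0 := rfl
@[simp] lemma Hq_one_imJ : (1:Hq).imJ = 0 := rfl
@[simp] lemma Hq_one_imK : (1:Hq).imK = 0 := rfl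
@[simp] lemma qi_re : (qi).re = 0 := rfl
@[simp] lemma qi_imI : (qi).imI = 1 := rfl
@[simp] lemma qi_imJ : (qi).imJ = 0 := rfl
@[simp] lemma qi_imK : (qi).imK = 0 := rfl
@[simp] lemma qj_re : (qj).re = 0 := rfl
@[simp] lemma qj_imI : (qj).imI = 0 := rfl
@[simp] lemma qj_imJ : (qj).imJ = 1 := rfl
@[simp] lemma qj_imK : (qj).imK = 0 := rfl
@[simp] lemma qk_re : (qk).re = 0 := rfl
@[simp] lemma qk_imI : (qk).imI = 0 := rfl
@[simp] lemma qk_imJ : (qk).imJ = 0 := rfl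
@[simp] lemma qk_imK : (qk).imK = 1 := rfl

-- evalQ basics
lemma evalQ_add (p q : Hq[X]) (x : Hq) : evalQ (p + q) x = evalQ p x + evalQ q x :=
  Polynomial.sum_add_index p q _ (fun _ => by simp) (fun _ _ _ => by rw [mul_add])

lemma evalQ_monomial (n : ℕ) (a : Hq) (x : Hq) : evalQ (monomial n a) x = x ^ n * a :=
  Polynomial.sum_monomial_index a _ (by simp)

lemma evalQ_mul_monomial (p : Hq[X]) (n : ℕ) (b x : Hq) :
    evalQ (p * monomial n b) x = x ^ n * evalQ p x * b := by
  induction p using Polynomial.induction_on' with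
  | add p q hp hq => rw [add_mul, evalQ_add, hp, hq, evalQ_add, mul_add, add_mul]
  | monomial m a =>
      rw [monomial_mul_monomial, evalQ_monomial, evalQ_monomial, pow_add, pow_mul_comm]
      rw [mul_assoc, mul_assoc, mul_assoc]

lemma conj_pow_eq (h x : Hq) (hh : h ≠ 0) (n : ℕ) :
    (h⁻¹ * x * h) ^ n = h⁻¹ * x ^ n * h := by
  induction n with
  | zero => simp [inv_mul_cancel₀ hh]
  | succ n ih =>
      rw [pow_succ, ih, pow_succ]
      simp only [mul_assoc]
      rw [← mul_assoc h h⁻¹, mul_inv_cancel₀ hh, one_mul]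

lemma evalQ_mul_of_ne (p q : Hq[X]) (x : Hq) (h : evalQ p x ≠ 0) :
    evalQ (p * q) x = evalQ p x * evalQ q ((evalQ p x)⁻¹ * x * evalQ p x) := by
  induction q using Polynomial.induction_on' with
  | add q r hq hr => rw [mul_add, evalQ_add, hq, hr, evalQ_add, mul_add]
  | monomial n b =>
      rw [evalQ_mul_monomial, evalQ_monomial, conj_pow_eq _ _ h]
      simp only [← mul_assoc]
      rw [mul_inv_cancel₀ h, one_mul]

lemma evalQ_commute_mul (p q : Hq[X]) (x : Hq) (hc : Commute x (evalQ p x)) :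
    evalQ (p * q) x = evalQ p x * evalQ q x := by
  induction q using Polynomial.induction_on' with
  | add q r hq hr => rw [mul_add, evalQ_add, hq, hr, evalQ_add, mul_add]
  | monomial n b =>
      rw [evalQ_mul_monomial, evalQ_monomial, ← mul_assoc, (hc.pow_left n).eq]

-- conjPoly basics
lemma coeff_conjPoly (p : Hq[X]) (n : ℕ) : (conjPoly p).coeff n = star (p.coeff n) := by
  rw [conjPoly, Polynomial.sum, finset_sum_coeff]
  simp only [C_mul_X_pow_eq_monomial, coeff_monomial]
  rw [Finset.sum_ite_eq' p.support n (fun k => star (p.coeff k))]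
  by_cases hn : n ∈ p.support
  · simp [hn]
  · simp [hn, Polynomial.notMem_support_iff.mp hn]

lemma conjPoly_mul (p q : Hq[X]) : conjPoly (p * q) = conjPoly q * conjPoly p := by
  refine Polynomial.ext fun n => ?_
  rw [coeff_conjPoly, coeff_mul, coeff_mul, star_sum]
  rw [← Finset.Nat.sum_antidiagonal_swap]
  apply Finset.sum_congr rfl
  intro ij _
  simp [coeff_conjPoly, star_mul]

lemma conjPoly_X_pow (n : ℕ) : conjPoly ((X : Hq[X]) ^ n) = X ^ n := by
  refine Polynomial.ext fun m => ?_
  rw [coeff_conjPoly]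
  simp [coeff_X_pow, apply_ite (star : Hq → Hq)]

lemma conjPoly_X_sub_C (a : Hq) : conjPoly (X - C a) = X - C (star a) := by
  refine Polynomial.ext fun m => ?_
  rw [coeff_conjPoly]
  simp [coeff_X, coeff_C, apply_ite (star : Hq → Hq), sub_eq_add_neg, coeff_one]


lemma norm_sq_comps (a : Hq) : a.re^2 + a.imI^2 + a.imJ^2 + a.imK^2 = ‖a‖^2 := by
  rw [sq (‖a‖), ← Quaternion.normSq_eq_norm_mul_self, Quaternion.normSq_def']

lemma mul_self_neg_one_re (x : Hq) (h : x * x = -1) : x.re = 0 := by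
  have hI : x.re * x.imI + x.imI * x.re + x.imJ * x.imK - x.imK * x.imJ = 0 := by
    have := congrArg QuaternionAlgebra.imI h; simpa [Quaternion.imI_mul] using this
  have hJ : x.re * x.imJ - x.imI * x.imK + x.imJ * x.re + x.imK * x.imI = 0 := by
    have := congrArg QuaternionAlgebra.imJ h; simpa [Quaternion.imJ_mul] using this
  have hK : x.re * x.imK + x.imI * x.imJ - x.imJ * x.imI + x.imK * x.re = 0 := by
    have := congrArg QuaternionAlgebra.imK h; simpa [Quaternion.imK_mul] using this
  have hR : x.re * x.re - x.imI * x.imI - x.imJ * x.imJ - x.imK * x.imK = -1 := by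
    have := congrArg QuaternionAlgebra.re h; simpa [Quaternion.re_mul] using this
  by_contra h0
  have e1 : x.imI = 0 := by
    have h2 : x.re * x.imI = 0 := by linarith
    exact (mul_eq_zero.mp h2).resolve_left h0
  have e2 : x.imJ = 0 := by
    have h2 : x.re * x.imJ = 0 := by linarith
    exact (mul_eq_zero.mp h2).resolve_left h0
  have e3 : x.imK = 0 := by
    have h2 : x.re * x.imK = 0 := by linarith
    exact (mul_eq_zero.mp h2).resolve_left h0
  rw [e1, e2, e3] at hR
  nlinarith [sq_nonneg x.re]

lemma re_mul_comm (a b : Hq) : (a * b).re = (b * a).re := by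
  simp [Quaternion.re_mul]; ring

lemma lift_pow_right (I : Hq) (hI : I * I = -1) (z : ℂ) (k : ℕ) (c : Hq) :
    (Complex.liftAux I hI z) ^ k * c = (z^k).re • c + (z^k).im • (I * c) := by
  rw [← map_pow, Complex.liftAux_apply, add_mul, smul_mul_assoc]
  congr 1
  rw [Algebra.smul_def]

lemma lift_pow_left (I : Hq) (hI : I * I = -1) (z : ℂ) (k : ℕ) (c : Hq) :
    c * (Complex.liftAux I hI z) ^ k = (z^k).re • c + (z^k).im • (c * I) := by
  rw [← map_pow, Complex.liftAux_apply, mul_add, mul_smul_comm]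
  congr 1
  rw [Algebra.smul_def, ← Algebra.commutes]

lemma lift_re (I : Hq) (hI : I * I = -1) (z : ℂ) (hIre : I.re = 0) :
    (Complex.liftAux I hI z).re = z.re := by
  rw [Complex.liftAux_apply]
  simp [hIre, Quaternion.re_smul]

lemma sphere4 (c3 c2 c1 c0 w : Hq)
    (hw : c3 * w^3 + c2 * w^2 + c1 * w + c0 = 0) :
    ∃ x : Hq, x.re = w.re ∧ x^3 * c3 + x^2 * c2 + x * c1 + c0 = 0 := by
  by_cases him : w.im = 0
  · refine ⟨w, rfl, ?_⟩
    have hw' : w = ((w.re : ℝ) : Hq) := by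
      conv_lhs => rw [← Quaternion.re_add_im w, him, add_zero]
    rw [hw'] at hw ⊢
    rw [((Quaternion.coe_commute w.re c3).pow_left 3).eq,
        ((Quaternion.coe_commute w.re c2).pow_left 2).eq,
        (Quaternion.coe_commute w.re c1).eq]
    exact hw
  · set β : ℝ := ‖w.im‖ with hβdef
    have hβ : β ≠ 0 := by simpa [hβdef] using him
    set J : Hq := β⁻¹ • w.im with hJdef
    have hsum : w.imI^2 + w.imJ^2 + w.imK^2 = β^2 := by
      have := norm_sq_comps (Quaternion.im w)
      simpa [Quaternion.re_im, Quaternion.imI_im, Quaternion.imJ_im, Quaternion.imK_im] using this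
    have hJ : J * J = -1 := by
      ext
      · simp [hJdef, Quaternion.re_mul, Quaternion.re_smul, Quaternion.re_im,
          Quaternion.imI_im, Quaternion.imJ_im, Quaternion.imK_im]
        field_simp
        linarith [hsum]
      · simp [hJdef, Quaternion.imI_mul, Quaternion.re_im, Quaternion.imI_im,
          Quaternion.imJ_im, Quaternion.imK_im]; right; ring
      · simp [hJdef, Quaternion.imJ_mul, Quaternion.re_im, Quaternion.imI_im,
          Quaternion.imJ_im, Quaternion.imK_im]; right; ring
      · simp [hJdef, Quaternion.imK_mul, Quaternion.re_im, Quaternion.imI_im,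
          Quaternion.imJ_im, Quaternion.imK_im]; right; ring
    have hJre : J.re = 0 := by simp [hJdef, Quaternion.re_smul, Quaternion.re_im]
    set z : ℂ := ⟨w.re, β⟩ with hzdef
    have hzre : z.re = w.re := rfl
    have hzim : z.im = β := rfl
    have hwz : w = Complex.liftAux J hJ z := by
      rw [Complex.liftAux_apply, hzre, hzim, hJdef, smul_smul, mul_inv_cancel₀ hβ, one_smul]
      exact (Quaternion.re_add_im w).symm
    set A : Hq := (z^3).re • c3 + (z^2).re • c2 + (z^1).re • c1 + c0 with hA
    set B : Hq := (z^3).im • c3 + (z^2).im • c2 + (z^1).im • c1 with hB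
    have key : A + B * J = 0 := by
      rw [hA, hB]
      rw [hwz] at hw
      have e3 := lift_pow_left J hJ z 3 c3
      have e2 := lift_pow_left J hJ z 2 c2
      have e1 := lift_pow_left J hJ z 1 c1
      rw [pow_one] at e1
      rw [e3, e2, e1] at hw
      rw [← hw]
      simp only [add_mul, smul_mul_assoc, pow_one]
      abel
    by_cases hBz : B = 0
    · refine ⟨w, rfl, ?_⟩
      have hA0 : A = 0 := by rw [hBz, zero_mul, add_zero] at key; exact key
      have e3 := lift_pow_right J hJ z 3 c3
      have e2 := lift_pow_right J hJ z 2 c2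
      have e1 := lift_pow_right J hJ z 1 c1
      rw [pow_one] at e1
      have hx : w^3*c3 + w^2*c2 + w*c1 + c0 = A + J * B := by
        rw [hwz, e3, e2, e1, hA, hB]
        simp only [mul_add, mul_smul_comm, pow_one]
        abel
      rw [hx, hBz, mul_zero, add_zero, hA0]
    · set I2 : Hq := B * J * B⁻¹ with hI2def
      have hI2 : I2 * I2 = -1 := by
        rw [hI2def]
        simp only [mul_assoc]
        rw [← mul_assoc B⁻¹ B, inv_mul_cancel₀ hBz, one_mul, ← mul_assoc J J, hJ]
        rw [neg_one_mul, mul_neg, mul_inv_cancel₀ hBz]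
      have hI2B : I2 * B = B * J := by
        rw [hI2def, mul_assoc (B * J), inv_mul_cancel₀ hBz, mul_one]
      refine ⟨Complex.liftAux I2 hI2 z, ?_, ?_⟩
      · rw [lift_re I2 hI2 z (mul_self_neg_one_re I2 hI2), hzre]
      · have e3 := lift_pow_right I2 hI2 z 3 c3
        have e2 := lift_pow_right I2 hI2 z 2 c2
        have e1 := lift_pow_right I2 hI2 z 1 c1
        rw [pow_one] at e1
        have hx : (Complex.liftAux I2 hI2 z)^3*c3 + (Complex.liftAux I2 hI2 z)^2*c2
            + (Complex.liftAux I2 hI2 z)*c1 + c0 = A + I2 * B := by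
          rw [e3, e2, e1, hA, hB]
          simp only [mul_add, mul_smul_comm, pow_one]
          abel
        rw [hx, hI2B]
        exact key


lemma re_three_prod_eq_zero (x y z : ℂ) (hx : x.re = 0) (hy : y.re = 0) (hz : z.re = 0) :
    (x * y * z).re = 0 := by
  simp [Complex.mul_re, Complex.mul_im, hx, hy, hz]

lemma multiset_sum_re_zero (m : Multiset ℂ) (h : ∀ t ∈ m, t.re = 0) : m.sum.re = 0 := by
  induction m using Multiset.induction with
  | empty => simp
  | cons a s ih =>
      simp only [Multiset.sum_cons, Complex.add_re]
      rw [h a (Multiset.mem_cons_self a s), ih (fun t ht => h t (Multiset.mem_cons_of_mem ht))]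
      ring

lemma exists_root_re_ne (a6 a4 a2 a0 : ℝ) (h6 : a6 ≠ 0) :
    ∃ z : ℂ, z.re ≠ 0 ∧
      (a6:ℂ) * z^6 + (a4:ℂ) * z^4 - 4 * z^3 + (a2:ℂ) * z^2 + (a0:ℂ) = 0 := by
  set p : ℂ[X] := C (a6:ℂ) * X^6 + C (a4:ℂ) * X^4 - C 4 * X^3 + C (a2:ℂ) * X^2 + C (a0:ℂ) with hp
  have h6' : (a6 : ℂ) ≠ 0 := by exact_mod_cast h6
  have hdeg : p.natDegree = 6 := by
    rw [hp]; compute_degree!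
  have hlead : p.leadingCoeff = (a6:ℂ) := by
    rw [leadingCoeff, hdeg, hp]
    simp [coeff_C, coeff_X_pow]
  have hp0 : p ≠ 0 := fun h0 => h6' (by rw [← hlead, h0, leadingCoeff_zero])
  have hcard : Multiset.card p.roots = 6 := by
    rw [splits_iff_card_roots.mp (IsAlgClosed.splits p), hdeg]
  have hfact := C_leadingCoeff_mul_prod_multiset_X_sub_C (p := p) (by rw [hcard, hdeg])
  have hcoeff3 : p.coeff 3 = -4 := by
    rw [hp]; simp [coeff_C, coeff_X_pow]
  by_contra hcon
  push_neg at hcon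
  have hroots : ∀ z ∈ p.roots, z.re = 0 := by
    intro z hz
    by_contra hre
    have hev : p.eval z = 0 := (mem_roots hp0).mp hz
    rw [hp] at hev
    simp only [eval_add, eval_sub, eval_mul, eval_pow, eval_C, eval_X] at hev
    exact (hcon z hre) hev
  -- compute coeff 3 from factorization
  have hc3 : ((Multiset.map (fun a => X - C a) p.roots).prod).coeff 3
      = (-1) ^ 3 * p.roots.esymm 3 := by
    have := Multiset.prod_X_sub_C_coeff p.roots (k := 3) (by rw [hcard]; norm_num)
    rw [hcard] at this
    norm_num at this ⊢
    exact this
  have heq : (a6:ℂ) * ((-1)^3 * p.roots.esymm 3) = -4 := by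
    have := congrArg (fun q : ℂ[X] => q.coeff 3) hfact
    rw [coeff_C_mul, hc3, hlead] at this
    rw [this, hcoeff3]
  have hesre : (p.roots.esymm 3).re = 0 := by
    rw [Multiset.esymm]
    apply multiset_sum_re_zero
    intro t ht
    rcases Multiset.mem_map.mp ht with ⟨s, hs, rfl⟩
    rcases Multiset.mem_powersetCard.mp hs with ⟨hsub, hcard3⟩
    rcases Multiset.card_eq_three.mp hcard3 with ⟨x, y, z, rfl⟩
    have hx : x ∈ p.roots := Multiset.mem_of_le hsub (by simp)
    have hy : y ∈ p.roots := Multiset.mem_of_le hsub (by simp)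
    have hz : z ∈ p.roots := Multiset.mem_of_le hsub (by simp)
    have : ({x, y, z} : Multiset ℂ).prod = x * y * z := by
      simp [Multiset.prod_cons, mul_assoc]
    rw [this]
    exact re_three_prod_eq_zero x y z (hroots x hx) (hroots y hy) (hroots z hz)
  norm_num at heq
  have hre := congrArg Complex.re heq
  rw [Complex.mul_re] at hre
  simp [hesre] at hre


def uQ : Hq := ⟨0,1,1,1⟩
def vQ : Hq := ⟨0,1,-1,1⟩
def qc3 (e:ℕ) : Hq := ⟨(e:ℝ)+3,0,0,0⟩
def qc2 (e:ℕ) : Hq := ⟨0,-((e:ℝ)+2),-((e:ℝ)+2),-((e:ℝ)+2)⟩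
def qc1 (e:ℕ) : Hq := ⟨0,(e:ℝ)+1,-((e:ℝ)+1),(e:ℝ)+1⟩
def qc0 (e:ℕ) : Hq := ⟨(e:ℝ),0,0,0⟩

@[simp] lemma uQ_re : (uQ).re = 0 := rfl
@[simp] lemma uQ_imI : (uQ).imI = 1 := rfl
@[simp] lemma uQ_imJ : (uQ).imJ = 1 := rfl
@[simp] lemma uQ_imK : (uQ).imK = 1 := rfl
@[simp] lemma vQ_re : (vQ).re = 0 := rfl
@[simp] lemma vQ_imI : (vQ).imI = 1 := rfl
@[simp] lemma vQ_imJ : (vQ).imJ = -1 := rfl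
@[simp] lemma vQ_imK : (vQ).imK = 1 := rfl
@[simp] lemma qc3_re (e:ℕ) : (qc3 e).re = (e:ℝ)+3 := rfl
@[simp] lemma qc3_imI (e:ℕ) : (qc3 e).imI = 0 := rfl
@[simp] lemma qc3_imJ (e:ℕ) : (qc3 e).imJ = 0 := rfl
@[simp] lemma qc3_imK (e:ℕ) : (qc3 e).imK = 0 := rfl
@[simp] lemma qc2_re (e:ℕ) : (qc2 e).re = 0 := rfl
@[simp] lemma qc2_imI (e:ℕ) : (qc2 e).imI = -((e:ℝ)+2) := rfl
@[simp] lemma qc2_imJ (e:ℕ) : (qc2 e).imJ = -((e:ℝ)+2) := rfl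
@[simp] lemma qc2_imK (e:ℕ) : (qc2 e).imK = -((e:ℝ)+2) := rfl
@[simp] lemma qc1_re (e:ℕ) : (qc1 e).re = 0 := rfl
@[simp] lemma qc1_imI (e:ℕ) : (qc1 e).imI = (e:ℝ)+1 := rfl
@[simp] lemma qc1_imJ (e:ℕ) : (qc1 e).imJ = -((e:ℝ)+1) := rfl
@[simp] lemma qc1_imK (e:ℕ) : (qc1 e).imK = (e:ℝ)+1 := rfl
@[simp] lemma qc0_re (e:ℕ) : (qc0 e).re = (e:ℝ) := rfl
@[simp] lemma qc0_imI (e:ℕ) : (qc0 e).imI = 0 := rfl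
@[simp] lemma qc0_imJ (e:ℕ) : (qc0 e).imJ = 0 := rfl
@[simp] lemma qc0_imK (e:ℕ) : (qc0 e).imK = 0 := rfl

def Gp (e:ℕ) : Hq[X] := monomial 3 (qc3 e) + monomial 2 (qc2 e) + monomial 1 (qc1 e) + monomial 0 (qc0 e)
def Gcp (e:ℕ) : Hq[X] := monomial 3 (qc3 e) + monomial 2 (-qc2 e) + monomial 1 (-qc1 e) + monomial 0 (qc0 e)

set_option maxHeartbeats 1000000 in
lemma LW : ((X : Hq[X]) - C qi) * (X - C qj) * (X - C qk)
    = monomial 3 1 + monomial 2 (-uQ) + monomial 1 vQ + monomial 0 1 := by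
  have hX : (X : Hq[X]) = monomial 1 1 := (monomial_one_one_eq_X).symm
  have hCi : (C qi : Hq[X]) = monomial 0 qi := by rw [← C_mul_X_pow_eq_monomial, pow_zero, mul_one]
  have hCj : (C qj : Hq[X]) = monomial 0 qj := by rw [← C_mul_X_pow_eq_monomial, pow_zero, mul_one]
  have hCk : (C qk : Hq[X]) = monomial 0 qk := by rw [← C_mul_X_pow_eq_monomial, pow_zero, mul_one]
  rw [hX, hCi, hCj, hCk]
  simp only [sub_mul, mul_sub, monomial_mul_monomial]
  refine Polynomial.ext fun n => ?_
  simp only [coeff_add, coeff_sub, coeff_neg, coeff_monomial]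
  norm_num
  rcases n with _|_|_|_|n <;>
    simp <;> ext <;>
    simp [Quaternion.re_mul, Quaternion.imI_mul, Quaternion.imJ_mul,
      Quaternion.imK_mul] <;> ring

lemma LP (e : ℕ) : (monomial e (1:Hq)) * (monomial 3 (1:Hq) + monomial 2 (-uQ) + monomial 1 vQ + monomial 0 1)
    = monomial (e+3) 1 + monomial (e+2) (-uQ) + monomial (e+1) vQ + monomial e 1 := by
  simp only [mul_add, monomial_mul_monomial, one_mul, add_zero]

lemma XD (n : ℕ) (a : Hq) : X * derivative (monomial n a) = monomial n (a * n) := by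
  cases n with
  | zero => simp
  | succ m =>
      rw [derivative_monomial]
      have hX : (X : Hq[X]) = monomial 1 1 := (monomial_one_one_eq_X).symm
      rw [hX, monomial_mul_monomial, one_mul]
      have h1 : 1 + (m + 1 - 1) = m + 1 := by omega
      rw [h1]

lemma LD (e : ℕ) :
    X * derivative (monomial (e+3) (1:Hq) + monomial (e+2) (-uQ) + monomial (e+1) vQ + monomial e 1)
    = (monomial e (1:Hq)) * Gp e := by
  have hc3 : (1:Hq) * ((e+3:ℕ):Hq) = qc3 e := by
    ext <;> simp only [one_mul, qc3_re, qc3_imI, qc3_imJ, qc3_imK, Quaternion.re_natCast, Quaternion.imI_natCast,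
      Quaternion.imJ_natCast, Quaternion.imK_natCast] <;> push_cast <;> ring
  have hc2 : (-uQ) * ((e+2:ℕ):Hq) = qc2 e := by
    ext <;>
    simp only [uQ_re, uQ_imI, uQ_imJ, uQ_imK, qc2_re, qc2_imI, qc2_imJ, qc2_imK, neg_mul, Quaternion.re_neg, Quaternion.imI_neg, Quaternion.imJ_neg,
      Quaternion.imK_neg, Quaternion.re_mul, Quaternion.imI_mul, Quaternion.imJ_mul,
      Quaternion.imK_mul, Quaternion.re_natCast, Quaternion.imI_natCast, Quaternion.imJ_natCast,
      Quaternion.imK_natCast] <;>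
    push_cast <;> ring
  have hc1 : vQ * ((e+1:ℕ):Hq) = qc1 e := by
    ext <;>
    simp only [vQ_re, vQ_imI, vQ_imJ, vQ_imK, qc1_re, qc1_imI, qc1_imJ, qc1_imK, Quaternion.re_mul, Quaternion.imI_mul, Quaternion.imJ_mul,
      Quaternion.imK_mul, Quaternion.re_natCast, Quaternion.imI_natCast, Quaternion.imJ_natCast,
      Quaternion.imK_natCast] <;>
    push_cast <;> ring
  have hc0 : (1:Hq) * ((e:ℕ):Hq) = qc0 e := by
    ext <;> simp only [one_mul, qc0_re, qc0_imI, qc0_imJ, qc0_imK, Quaternion.re_natCast, Quaternion.imI_natCast,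
      Quaternion.imJ_natCast, Quaternion.imK_natCast]
  rw [derivative_add, derivative_add, derivative_add]
  simp only [mul_add, XD]
  rw [hc3, hc2, hc1, hc0, Gp]
  simp only [mul_add, monomial_mul_monomial, one_mul, Nat.add_zero]



lemma star_qc3 (e : ℕ) : star (qc3 e) = qc3 e := by ext <;> simp
lemma star_qc2 (e : ℕ) : star (qc2 e) = -qc2 e := by ext <;> simp
lemma star_qc1 (e : ℕ) : star (qc1 e) = -qc1 e := by ext <;> simp
lemma star_qc0 (e : ℕ) : star (qc0 e) = qc0 e := by ext <;> simp

lemma LG1 (e : ℕ) : conjPoly (Gp e) = Gcp e := by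
  refine Polynomial.ext fun n => ?_
  rw [coeff_conjPoly, Gp, Gcp]
  simp only [coeff_add, coeff_monomial, star_add, apply_ite (star : Hq → Hq), star_zero]
  rcases n with _|_|_|_|n <;>
    simp [star_qc3, star_qc2, star_qc1, star_qc0]

def qh6 (e:ℕ) : Hq := ⟨((e:ℝ)+3)^2,0,0,0⟩
def qh4 (e:ℕ) : Hq := ⟨3*((e:ℝ)+2)^2,0,0,0⟩
def qh3 : Hq := ⟨-4,0,0,0⟩
def qh2 (e:ℕ) : Hq := ⟨3*((e:ℝ)+1)^2,0,0,0⟩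
def qh0 (e:ℕ) : Hq := ⟨(e:ℝ)^2,0,0,0⟩

@[simp] lemma qh6_re (e:ℕ) : (qh6 e).re = ((e:ℝ)+3)^2 := rfl
@[simp] lemma qh6_imI (e:ℕ) : (qh6 e).imI = 0 := rfl
@[simp] lemma qh6_imJ (e:ℕ) : (qh6 e).imJ = 0 := rfl
@[simp] lemma qh6_imK (e:ℕ) : (qh6 e).imK = 0 := rfl
@[simp] lemma qh4_re (e:ℕ) : (qh4 e).re = 3*((e:ℝ)+2)^2 := rfl
@[simp] lemma qh4_imI (e:ℕ) : (qh4 e).imI = 0 := rfl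
@[simp] lemma qh4_imJ (e:ℕ) : (qh4 e).imJ = 0 := rfl
@[simp] lemma qh4_imK (e:ℕ) : (qh4 e).imK = 0 := rfl
@[simp] lemma qh3_re : (qh3).re = -4 := rfl
@[simp] lemma qh3_imI : (qh3).imI = 0 := rfl
@[simp] lemma qh3_imJ : (qh3).imJ = 0 := rfl
@[simp] lemma qh3_imK : (qh3).imK = 0 := rfl
@[simp] lemma qh2_re (e:ℕ) : (qh2 e).re = 3*((e:ℝ)+1)^2 := rfl
@[simp] lemma qh2_imI (e:ℕ) : (qh2 e).imI = 0 := rfl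
@[simp] lemma qh2_imJ (e:ℕ) : (qh2 e).imJ = 0 := rfl
@[simp] lemma qh2_imK (e:ℕ) : (qh2 e).imK = 0 := rfl
@[simp] lemma qh0_re (e:ℕ) : (qh0 e).re = (e:ℝ)^2 := rfl
@[simp] lemma qh0_imI (e:ℕ) : (qh0 e).imI = 0 := rfl
@[simp] lemma qh0_imJ (e:ℕ) : (qh0 e).imJ = 0 := rfl
@[simp] lemma qh0_imK (e:ℕ) : (qh0 e).imK = 0 := rfl

set_option maxHeartbeats 1000000 in
lemma LG2 (e : ℕ) : Gp e * Gcp e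
    = monomial 6 (qh6 e) + monomial 4 (qh4 e)
      + monomial 3 qh3 + monomial 2 (qh2 e)
      + monomial 0 (qh0 e) := by
  rw [Gp, Gcp]
  refine Polynomial.ext fun n => ?_
  simp only [mul_add, add_mul, monomial_mul_monomial, coeff_add, coeff_monomial]
  rcases n with _|_|_|_|_|_|_|n
  · norm_num
    ext <;>
      simp [Quaternion.re_mul, Quaternion.imI_mul,
        Quaternion.imJ_mul, Quaternion.imK_mul] <;> ring
  · norm_num
    ext <;>
      simp [Quaternion.re_mul, Quaternion.imI_mul,
        Quaternion.imJ_mul, Quaternion.imK_mul] <;> ring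
  · norm_num
    ext <;>
      simp [Quaternion.re_mul, Quaternion.imI_mul,
        Quaternion.imJ_mul, Quaternion.imK_mul] <;> ring
  · norm_num
    ext <;>
      simp [Quaternion.re_mul, Quaternion.imI_mul,
        Quaternion.imJ_mul, Quaternion.imK_mul] <;> ring
  · norm_num
    ext <;>
      simp [Quaternion.re_mul, Quaternion.imI_mul,
        Quaternion.imJ_mul, Quaternion.imK_mul] <;> ring
  · norm_num
    ext <;>
      simp [Quaternion.re_mul, Quaternion.imI_mul,
        Quaternion.imJ_mul, Quaternion.imK_mul] <;> ring
  · norm_num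
    ext <;>
      simp [Quaternion.re_mul, Quaternion.imI_mul,
        Quaternion.imJ_mul, Quaternion.imK_mul] <;> ring
  · simp

set_option maxHeartbeats 1000000 in
set_option synthInstance.maxHeartbeats 400000 in
theorem stmt6 (d : ℕ) (hd : 3 ≤ d) (P : Hq[X])
    (hP : P = X ^ (d - 3) * (X - C qi) * (X - C qj) * (X - C qk)) :
    ¬ GaussLucas P := by
  intro hGL
  set e : ℕ := d - 3 with he
  have hqi : qi * qi = -1 := by
    ext <;> simp [Quaternion.re_mul, Quaternion.imI_mul, Quaternion.imJ_mul, Quaternion.imK_mul]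
  have hqj : qj * qj = -1 := by
    ext <;> simp [Quaternion.re_mul, Quaternion.imI_mul, Quaternion.imJ_mul, Quaternion.imK_mul]
  have hqk : qk * qk = -1 := by
    ext <;> simp [Quaternion.re_mul, Quaternion.imI_mul, Quaternion.imJ_mul, Quaternion.imK_mul]
  -- P as explicit sum of monomials
  have hPmon : P = monomial (e+3) 1 + monomial (e+2) (-uQ) + monomial (e+1) vQ + monomial e 1 := by
    rw [hP, mul_assoc (X^e) (X - C qi) (X - C qj), mul_assoc (X^e) ((X - C qi) * (X - C qj)) (X - C qk),
      LW, X_pow_eq_monomial, LP]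
  -- conjugate polynomial of P
  have hsi : star qi = -qi := by ext <;> simp
  have hsj : star qj = -qj := by ext <;> simp
  have hsk : star qk = -qk := by ext <;> simp
  have hconjP : conjPoly P = (X + C qk) * ((X + C qj) * ((X + C qi) * X^e)) := by
    rw [hP, conjPoly_mul, conjPoly_mul, conjPoly_mul, conjPoly_X_pow, conjPoly_X_sub_C,
      conjPoly_X_sub_C, conjPoly_X_sub_C, hsi, hsj, hsk, C_neg, C_neg, C_neg,
      sub_neg_eq_add, sub_neg_eq_add, sub_neg_eq_add]
  have hpair : ∀ a : Hq, a * a = -1 → ((X:Hq[X]) - C a) * (X + C a) = (X^2 + 1 : Hq[X]) := by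
    intro a ha
    have h1 : ((X:Hq[X]) - C a) * (X + C a) = X*X - C a * C a + (X * C a - C a * X) := by
      noncomm_ring
    rw [h1, X_mul (p := C a), sub_self, add_zero, ← C_mul, ha, ← pow_two]
    simp
  have hTcomm : ∀ p : Hq[X], ((X:Hq[X])^2 + 1) * p = p * ((X:Hq[X])^2 + 1) := by
    intro p
    rw [add_mul, mul_add, X_pow_mul, one_mul, mul_one]
  have hNP : normalPoly P
      = (X:Hq[X])^(2*e) * (((X:Hq[X])^2+1) * (((X:Hq[X])^2+1) * ((X:Hq[X])^2+1))) := by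
    rw [normalPoly, hconjP, hP]
    simp only [mul_assoc]
    rw [← mul_assoc (X - C qk) (X + C qk), hpair qk hqk]
    rw [hTcomm ((X + C qj) * ((X + C qi) * X^e))]
    simp only [mul_assoc]
    rw [← mul_assoc (X - C qj) (X + C qj), hpair qj hqj]
    rw [hTcomm ((X + C qi) * ((X:Hq[X])^e * ((X:Hq[X])^2+1)))]
    simp only [mul_assoc]
    rw [← mul_assoc (X - C qi) (X + C qi), hpair qi hqi]
    rw [hTcomm ((X:Hq[X])^e * (((X:Hq[X])^2+1) * ((X:Hq[X])^2+1)))]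
    simp only [mul_assoc]
    rw [← mul_assoc ((X:Hq[X])^e) ((X:Hq[X])^e), ← pow_add, ← two_mul]
  -- V(N(P)) is contained in the pure imaginary hyperplane
  have hVNP : VQ (normalPoly P) ⊆ {y : Hq | y.re = 0} := by
    intro x hx
    have hx' : evalQ (normalPoly P) x = 0 := hx
    rw [hNP, X_pow_mul,
      (show ((X:Hq[X])^(2*e)) = monomial (2*e) 1 from X_pow_eq_monomial _),
      evalQ_mul_monomial] at hx'
    have hT : evalQ ((X:Hq[X])^2 + 1) x = x^2 + 1 := by
      have h1 : ((X:Hq[X])^2 + 1) = monomial 2 1 + monomial 0 1 := by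
        rw [X_pow_eq_monomial]; simp
      rw [h1, evalQ_add, evalQ_monomial, evalQ_monomial, pow_zero, mul_one, mul_one]
    have hcomm : Commute x (evalQ ((X:Hq[X])^2+1) x) := by
      rw [hT]; exact Commute.add_right ((Commute.refl x).pow_right 2) (Commute.one_right x)
    rw [evalQ_commute_mul _ _ _ hcomm, evalQ_commute_mul _ _ _ hcomm, hT, mul_one] at hx'
    rcases mul_eq_zero.mp hx' with h | h
    · have h0 := pow_eq_zero_iff'.mp h
      show x.re = 0
      rw [h0.1]
      simp
    · have h1 : x^2 + 1 = 0 := by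
        rcases mul_eq_zero.mp h with h1 | h1
        · exact h1
        · rcases mul_eq_zero.mp h1 with h2 | h2 <;> exact h2
      have h2 : x * x = -1 := by
        rw [← pow_two]
        exact eq_neg_of_add_eq_zero_left h1
      exact mul_self_neg_one_re x h2
  have hconv : Convex ℝ {y : Hq | y.re = 0} := by
    intro a ha b hb s t hs ht hst
    simp only [Set.mem_setOf_eq] at *
    simp [Quaternion.re_add, Quaternion.re_smul, ha, hb]
  -- complex root with nonzero real part
  have h6 : ((e:ℝ)+3)^2 ≠ 0 := by positivity
  obtain ⟨z₀, hz₀re, hz₀⟩ := exists_root_re_ne (((e:ℝ)+3)^2) (3*((e:ℝ)+2)^2)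
    (3*((e:ℝ)+1)^2) ((e:ℝ)^2) h6
  set ψ := Complex.liftAux qi hqi with hψdef
  set x : Hq := ψ z₀ with hxdef
  have hqire : qi.re = 0 := by simp
  have hxre : x.re = z₀.re := lift_re qi hqi z₀ hqire
  have hψr : ∀ r : ℝ, ((r : Hq)) = ψ (r:ℂ) := by
    intro r
    rw [hψdef, Complex.liftAux_apply]
    simp
  -- the "universal ending": any root of Gp e with real part z₀.re yields a contradiction
  have final : ∀ x₁ : Hq, x₁.re = z₀.re → evalQ (Gp e) x₁ = 0 → False := by
    intro x₁ hre hGx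
    have hx₁0 : x₁ ≠ 0 := by
      intro h0
      apply hz₀re
      rw [← hre, h0]
      simp
    have h1 : evalQ (X * derivative P) x₁ = 0 := by
      rw [hPmon, LD e,
        (show (monomial e (1:Hq)) * Gp e = Gp e * monomial e 1 by
          rw [← X_pow_eq_monomial, X_pow_mul]),
        evalQ_mul_monomial, hGx]
      simp
    rw [X_mul, (show (X:Hq[X]) = monomial 1 1 from monomial_one_one_eq_X.symm),
      evalQ_mul_monomial, mul_one, pow_one] at h1
    have hder : evalQ (derivative P) x₁ = 0 := (mul_eq_zero.mp h1).resolve_left hx₁0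
    have hmem := hGL (show x₁ ∈ VQ (derivative P) from hder)
    have hre0 : x₁.re = 0 := convexHull_min hVNP hconv hmem
    apply hz₀re
    rw [← hre]
    exact hre0
  -- evaluate the normal polynomial of G at x
  have hHx : evalQ (Gp e * Gcp e) x = 0 := by
    rw [LG2]
    rw [evalQ_add, evalQ_add, evalQ_add, evalQ_add, evalQ_monomial, evalQ_monomial,
      evalQ_monomial, evalQ_monomial, evalQ_monomial, pow_zero, one_mul]
    have hq6 : qh6 e = ((((e:ℝ)+3)^2 : ℝ) : Hq) := rfl
    have hq4 : qh4 e = (((3*((e:ℝ)+2)^2 : ℝ)) : Hq) := rfl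
    have hq3 : qh3 = (((-4 : ℝ)) : Hq) := rfl
    have hq2 : qh2 e = (((3*((e:ℝ)+1)^2 : ℝ)) : Hq) := rfl
    have hq0 : qh0 e = ((((e:ℝ)^2 : ℝ)) : Hq) := rfl
    rw [hq6, hq4, hq3, hq2, hq0, hψr, hψr, hψr, hψr, hψr, hxdef,
      ← map_pow, ← map_pow, ← map_pow, ← map_pow,
      ← map_mul, ← map_mul, ← map_mul, ← map_mul,
      ← map_add, ← map_add, ← map_add, ← map_add]
    have hz : (z₀^6 * ((((e:ℝ)+3)^2 :ℝ):ℂ) + z₀^4 * ((3*((e:ℝ)+2)^2:ℝ):ℂ)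
        + z₀^3 * ((-4:ℝ):ℂ) + z₀^2 * ((3*((e:ℝ)+1)^2:ℝ):ℂ) + (((e:ℝ)^2:ℝ):ℂ)) = 0 := by
      push_cast at hz₀ ⊢
      linear_combination hz₀
    rw [hz, map_zero]
  by_cases hG : evalQ (Gp e) x = 0
  · exact final x hxre hG
  · have hsp := evalQ_mul_of_ne (Gp e) (conjPoly (Gp e)) x hG
    rw [LG1, hHx] at hsp
    set y := (evalQ (Gp e) x)⁻¹ * x * evalQ (Gp e) x with hydef
    have hGc : evalQ (Gcp e) y = 0 := by
      rcases mul_eq_zero.mp hsp.symm with h | h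
      · exact absurd h hG
      · exact h
    have hyre : y.re = x.re := by
      rw [hydef, re_mul_comm, ← mul_assoc, mul_inv_cancel₀ hG, one_mul]
    rw [Gcp, evalQ_add, evalQ_add, evalQ_add, evalQ_monomial, evalQ_monomial, evalQ_monomial,
      evalQ_monomial, pow_one, pow_zero, one_mul] at hGc
    have hleft : qc3 e * (star y)^3 + qc2 e * (star y)^2 + qc1 e * (star y) + qc0 e = 0 := by
      have hst := congrArg star hGc
      simpa [star_add, star_mul, star_pow, star_qc3, star_qc2, star_qc1, star_qc0] using hst
    obtain ⟨x₀, hx₀re, hx₀eq⟩ := sphere4 (qc3 e) (qc2 e) (qc1 e) (qc0 e) (star y) hleft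
    have hstre : (star y).re = y.re := by simp
    have hGx₀ : evalQ (Gp e) x₀ = 0 := by
      rw [Gp, evalQ_add, evalQ_add, evalQ_add, evalQ_monomial, evalQ_monomial, evalQ_monomial,
        evalQ_monomial, pow_one, pow_zero, one_mul]
      exact hx₀eq
    exact final x₀ (by rw [hx₀re, hstre, hyre, hxre]) hGx₀

end
end

section
/- Let d ≥ 3 and let P(X) = X^{d−3}·(X−i)·(X−j)·(X−k) ∈ ℍ[X]. Then P(X) = X^d − X^{d−1}(i+j+k) + X^{d−2}(i−j+k) + X^{d−3}, N(P)(X) = X^{2d−6}·(X²+1)³, and N(P')(X) = d²X^{2d−2} + 3(d−1)²X^{2d−4} − 4X^{2d−5} + 3(d−2)²X^{2d−6} + (d−3)²X^{2d−8}. In particular, N(P') contains exactly one monomial of odd degree, namely −4X^{2d−5}. -/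
open Polynomial
open scoped Classical RealInnerProductSpace ENNReal

noncomputable section

noncomputable def fq : ℝ →+* Hq := algebraMap ℝ Hq

noncomputable def Φ (A B Cc D : ℝ[X]) : Hq[X] :=
  A.map fq + B.map fq * C qi + Cc.map fq * C qj + D.map fq * C qk

lemma central_C (a : Hq) (h : ∀ b, a * b = b * a) (q : Hq[X]) : C a * q = q * C a := by
  refine Polynomial.ext fun n => ?_
  simp [coeff_C_mul, coeff_mul_C, h]

lemma comm_map (A : ℝ[X]) (q : Hq[X]) : A.map fq * q = q * A.map fq := by
  induction A using Polynomial.induction_on' with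
  | add p p' hp hp' => simp [Polynomial.map_add, add_mul, mul_add, hp, hp']
  | monomial n a =>
    rw [Polynomial.map_monomial, ← Polynomial.C_mul_X_pow_eq_monomial]
    have h1 : C (fq a) * q = q * C (fq a) :=
      central_C _ (fun b => (Algebra.commutes a b)) q
    have h2 : (X : Hq[X]) ^ n * q = q * X ^ n := X_pow_mul
    calc C (fq a) * X ^ n * q = C (fq a) * (X ^ n * q) := mul_assoc _ _ _
      _ = C (fq a) * (q * X ^ n) := by rw [h2]
      _ = C (fq a) * q * X ^ n := (mul_assoc _ _ _).symm
      _ = q * C (fq a) * X ^ n := by rw [h1]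
      _ = q * (C (fq a) * X ^ n) := mul_assoc _ _ _

section Abstract
variable {R : Type*} [Ring R]

lemma quat_expand (i j k : R)
    (hii : i*i = -1) (hjj : j*j = -1) (hkk : k*k = -1)
    (hij : i*j = k) (hjk : j*k = i) (hki : k*i = j)
    (hji : j*i = -k) (hkj : k*j = -i) (hik : i*k = -j)
    (a0 a1 a2 a3 b0 b1 b2 b3 : R)
    (c0 : ∀ x y : R, x * (b0 * y) = b0 * (x * y)) (c0' : ∀ x : R, x * b0 = b0 * x)
    (c1 : ∀ x y : R, x * (b1 * y) = b1 * (x * y)) (c1' : ∀ x : R, x * b1 = b1 * x)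
    (c2 : ∀ x y : R, x * (b2 * y) = b2 * (x * y)) (c2' : ∀ x : R, x * b2 = b2 * x)
    (c3 : ∀ x y : R, x * (b3 * y) = b3 * (x * y)) (c3' : ∀ x : R, x * b3 = b3 * x) :
    (a0 + a1*i + a2*j + a3*k) * (b0 + b1*i + b2*j + b3*k)
      = (a0*b0 - a1*b1 - a2*b2 - a3*b3) + (a0*b1 + a1*b0 + a2*b3 - a3*b2)*i
        + (a0*b2 - a1*b3 + a2*b0 + a3*b1)*j + (a0*b3 + a1*b2 - a2*b1 + a3*b0)*k := by
  simp only [mul_add, add_mul, sub_mul, mul_assoc, mul_neg, neg_mul, mul_one, one_mul,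
    c0, c1, c2, c3, c0', c1', c2', c3', hii, hjj, hkk, hij, hjk, hki, hji, hkj, hik]
  abel

end Abstract

lemma qii : qi * qi = -1 := by ext <;> simp [Quaternion.re_mul, Quaternion.imI_mul, Quaternion.imJ_mul, Quaternion.imK_mul] <;> simp [qi] <;> rfl
lemma qjj : qj * qj = -1 := by ext <;> simp [Quaternion.re_mul, Quaternion.imI_mul, Quaternion.imJ_mul, Quaternion.imK_mul] <;> simp [qj] <;> rfl
lemma qkk : qk * qk = -1 := by ext <;> simp [Quaternion.re_mul, Quaternion.imI_mul, Quaternion.imJ_mul, Quaternion.imK_mul] <;> simp [qk] <;> rfl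
lemma qij : qi * qj = qk := by ext <;> simp [Quaternion.re_mul, Quaternion.imI_mul, Quaternion.imJ_mul, Quaternion.imK_mul] <;> simp [qi, qj, qk]
lemma qjk : qj * qk = qi := by ext <;> simp [Quaternion.re_mul, Quaternion.imI_mul, Quaternion.imJ_mul, Quaternion.imK_mul] <;> simp [qi, qj, qk]
lemma qki : qk * qi = qj := by ext <;> simp [Quaternion.re_mul, Quaternion.imI_mul, Quaternion.imJ_mul, Quaternion.imK_mul] <;> simp [qi, qj, qk]
lemma qji : qj * qi = -qk := by ext <;> simp [Quaternion.re_mul, Quaternion.imI_mul, Quaternion.imJ_mul, Quaternion.imK_mul] <;> simp [qi, qj, qk]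
lemma qkj : qk * qj = -qi := by ext <;> simp [Quaternion.re_mul, Quaternion.imI_mul, Quaternion.imJ_mul, Quaternion.imK_mul] <;> simp [qi, qj, qk]
lemma qik : qi * qk = -qj := by ext <;> simp [Quaternion.re_mul, Quaternion.imI_mul, Quaternion.imJ_mul, Quaternion.imK_mul] <;> simp [qi, qj, qk]

lemma Cqii : (C qi : Hq[X]) * C qi = -1 := by rw [← C_mul, qii, C_neg, C_1]
lemma Cqjj : (C qj : Hq[X]) * C qj = -1 := by rw [← C_mul, qjj, C_neg, C_1]
lemma Cqkk : (C qk : Hq[X]) * C qk = -1 := by rw [← C_mul, qkk, C_neg, C_1]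
lemma Cqij : (C qi : Hq[X]) * C qj = C qk := by rw [← C_mul, qij]
lemma Cqjk : (C qj : Hq[X]) * C qk = C qi := by rw [← C_mul, qjk]
lemma Cqki : (C qk : Hq[X]) * C qi = C qj := by rw [← C_mul, qki]
lemma Cqji : (C qj : Hq[X]) * C qi = -C qk := by rw [← C_mul, qji, C_neg]
lemma Cqkj : (C qk : Hq[X]) * C qj = -C qi := by rw [← C_mul, qkj, C_neg]
lemma Cqik : (C qi : Hq[X]) * C qk = -C qj := by rw [← C_mul, qik, C_neg]

lemma comm_map' (A : ℝ[X]) (x y : Hq[X]) : x * (A.map fq * y) = A.map fq * (x * y) := by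
  rw [← mul_assoc, ← comm_map, mul_assoc]

lemma Φ_mul (A B Cc D A' B' Cc' D' : ℝ[X]) :
    Φ A B Cc D * Φ A' B' Cc' D'
      = Φ (A*A' - B*B' - Cc*Cc' - D*D') (A*B' + B*A' + Cc*D' - D*Cc')
          (A*Cc' - B*D' + Cc*A' + D*B') (A*D' + B*Cc' - Cc*B' + D*A') := by
  unfold Φ
  rw [quat_expand (C qi) (C qj) (C qk) Cqii Cqjj Cqkk Cqij Cqjk Cqki Cqji Cqkj Cqik
    (A.map fq) (B.map fq) (Cc.map fq) (D.map fq)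
    (A'.map fq) (B'.map fq) (Cc'.map fq) (D'.map fq)
    (comm_map' A') (fun x => (comm_map A' x).symm)
    (comm_map' B') (fun x => (comm_map B' x).symm)
    (comm_map' Cc') (fun x => (comm_map Cc' x).symm)
    (comm_map' D') (fun x => (comm_map D' x).symm)]
  simp only [Polynomial.map_add, Polynomial.map_sub, Polynomial.map_mul]

lemma Φ_congr {A B Cc D A' B' Cc' D' : ℝ[X]} (h1 : A = A') (h2 : B = B')
    (h3 : Cc = Cc') (h4 : D = D') : Φ A B Cc D = Φ A' B' Cc' D' := by
  rw [h1, h2, h3, h4]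

lemma Φ_coeff (A B Cc D : ℝ[X]) (n : ℕ) :
    (Φ A B Cc D).coeff n
      = fq (A.coeff n) + fq (B.coeff n) * qi + fq (Cc.coeff n) * qj + fq (D.coeff n) * qk := by
  simp [Φ, coeff_mul_C, coeff_map]

lemma Φ_real (A : ℝ[X]) : Φ A 0 0 0 = A.map fq := by simp [Φ]

lemma Φ_derivative (A B Cc D : ℝ[X]) :
    derivative (Φ A B Cc D)
      = Φ (derivative A) (derivative B) (derivative Cc) (derivative D) := by
  simp [Φ, derivative_mul, Polynomial.derivative_map]


lemma conjPoly_coeff (P : Hq[X]) (n : ℕ) : (conjPoly P).coeff n = star (P.coeff n) := by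
  rw [conjPoly, Polynomial.sum_def, finset_sum_coeff]
  simp only [coeff_C_mul, coeff_X_pow, mul_ite, mul_one, mul_zero]
  rw [Finset.sum_ite_eq P.support n (fun k => star (P.coeff k))]
  by_cases h : n ∈ P.support
  · simp [h]
  · rw [if_neg h, Polynomial.notMem_support_iff.mp h, star_zero]

lemma star_qi : star qi = -qi := by ext <;> simp <;> simp [qi]
lemma star_qj : star qj = -qj := by ext <;> simp <;> simp [qj]
lemma star_qk : star qk = -qk := by ext <;> simp <;> simp [qk]

lemma Φ_conj (A B Cc D : ℝ[X]) : conjPoly (Φ A B Cc D) = Φ A (-B) (-Cc) (-D) := by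
  refine Polynomial.ext fun n => ?_
  rw [conjPoly_coeff, Φ_coeff, Φ_coeff]
  simp only [star_add, star_mul, star_qi, star_qj, star_qk, coeff_neg, map_neg]
  have hs : ∀ r : ℝ, star (fq r) = fq r := fun r => by
    simp [fq, Quaternion.algebraMap_def, Quaternion.star_coe]
  have hc : ∀ (r : ℝ) (x : Hq), x * fq r = fq r * x := fun r x =>
    (Algebra.commutes r x).symm
  rw [hs, hs, hs, hs]
  simp only [neg_mul, mul_neg, hc]

set_option maxHeartbeats 1000000 in
theorem stmt7 (d : ℕ) (hd : 3 ≤ d) (P : Hq[X])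
    (hP : P = X ^ (d - 3) * (X - C qi) * (X - C qj) * (X - C qk)) :
    P = X ^ d - X ^ (d - 1) * C (qi + qj + qk) + X ^ (d - 2) * C (qi - qj + qk)
        + X ^ (d - 3) ∧
    normalPoly P = X ^ (2 * d - 6) * (X ^ 2 + 1) ^ 3 ∧
    normalPoly (derivative P) =
      (d : Hq[X]) ^ 2 * X ^ (2 * d - 2) + 3 * ((d : Hq[X]) - 1) ^ 2 * X ^ (2 * d - 4)
        - 4 * X ^ (2 * d - 5) + 3 * ((d : Hq[X]) - 2) ^ 2 * X ^ (2 * d - 6)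
        + ((d : Hq[X]) - 3) ^ 2 * X ^ (2 * d - 8) ∧
    (∃! m, Odd m ∧ (normalPoly (derivative P)).coeff m ≠ 0) ∧
    (normalPoly (derivative P)).coeff (2 * d - 5) = -4 := by
  obtain ⟨m, rfl⟩ : ∃ m, d = m + 3 := ⟨d - 3, by omega⟩
  have e1 : m + 3 - 1 = m + 2 := by omega
  have e2 : m + 3 - 2 = m + 1 := by omega
  have e3 : m + 3 - 3 = m := by omega
  have e4 : 2 * (m + 3) - 6 = 2 * m := by omega
  have e5 : 2 * (m + 3) - 2 = 2 * m + 4 := by omega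
  have e6 : 2 * (m + 3) - 4 = 2 * m + 2 := by omega
  have e7 : 2 * (m + 3) - 5 = 2 * m + 1 := by omega
  rw [e3] at hP
  have hX : (X : Hq[X]) ^ m = Φ (X ^ m) 0 0 0 := by simp [Φ]
  have hXi : (X : Hq[X]) - C qi = Φ X (-1) 0 0 := by simp [Φ, sub_eq_add_neg]
  have hXj : (X : Hq[X]) - C qj = Φ X 0 (-1) 0 := by simp [Φ, sub_eq_add_neg]
  have hXk : (X : Hq[X]) - C qk = Φ X 0 0 (-1) := by simp [Φ, sub_eq_add_neg]
  have hP4 : P = Φ (X^(m+3) + X^m) (X^(m+1) - X^(m+2))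
      (-X^(m+2) - X^(m+1)) (X^(m+1) - X^(m+2)) := by
    rw [hP, hX, hXi, hXj, hXk, Φ_mul, Φ_mul, Φ_mul]
    exact Φ_congr (by ring) (by ring) (by ring) (by ring)
  set R : ℝ[X] := (((m+3)^2 : ℕ) : ℝ[X]) * X^(2*m+4) + ((3*(m+2)^2 : ℕ) : ℝ[X]) * X^(2*m+2)
      - ((4:ℕ) : ℝ[X]) * X^(2*m+1) + ((3*(m+1)^2 : ℕ) : ℝ[X]) * X^(2*m)
      + ((m^2 : ℕ) : ℝ[X]) * X^(2*(m+3)-8) with hRdef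
  have hN' : normalPoly (derivative P) = Φ R 0 0 0 := by
    rw [normalPoly, hP4, Φ_derivative, Φ_conj, Φ_mul]
    refine Φ_congr ?_ (by ring) (by ring) (by ring)
    simp only [derivative_add, derivative_sub, derivative_neg, derivative_X_pow]
    rw [show m+3-1 = m+2 by omega, show m+2-1 = m+1 by omega, show m+1-1 = m by omega]
    rcases m with _ | k
    · rw [hRdef]
      simp only [C_eq_natCast]
      push_cast
      norm_num [map_ofNat]
      ring
    · rw [hRdef, show k+1-1 = k by omega, show 2*(k+1+3)-8 = 2*k by omega]
      simp only [C_eq_natCast]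
      push_cast
      ring
  have hcoeff : ∀ n, (normalPoly (derivative P)).coeff n = fq (R.coeff n) := by
    intro n
    rw [hN', Φ_coeff]
    simp only [coeff_zero, map_zero, zero_mul, add_zero]
  have h21 : (normalPoly (derivative P)).coeff (2*m+1) = -4 := by
    rw [hcoeff]
    have hr : R.coeff (2*m+1) = -4 := by
      have h1 : ¬(2*m+1 = 2*m+4) := by omega
      have h2 : ¬(2*m+1 = 2*m+2) := by omega
      have h4 : ¬(2*m+1 = 2*m) := by omega
      have h5 : ¬(2*m+1 = 2*(m+3)-8) := by omega
      rw [hRdef]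
      simp only [← C_eq_natCast, coeff_add, coeff_sub, coeff_C_mul, coeff_X_pow]
      simp [h1, h2, h4, h5]
    rw [hr, map_neg, map_ofNat]
  have hzero : ∀ n, Odd n → n ≠ 2*m+1 → (normalPoly (derivative P)).coeff n = 0 := by
    intro n hn hne
    obtain ⟨t, rfl⟩ := hn
    rw [hcoeff]
    have hr : R.coeff (2*t+1) = 0 := by
      have h1 : ¬(2*t+1 = 2*m+4) := by omega
      have h2 : ¬(2*t+1 = 2*m+2) := by omega
      have h3 : ¬(2*t+1 = 2*m+1) := by omega
      have h4 : ¬(2*t+1 = 2*m) := by omega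
      have h5 : ¬(2*t+1 = 2*(m+3)-8) := by omega
      rw [hRdef]
      simp only [← C_eq_natCast, coeff_add, coeff_sub, coeff_C_mul, coeff_X_pow]
      simp [h1, h2, h3, h4, h5, show ¬ 2*t = 2*m+3 by omega, show ¬ 2*t = 2*m+1 by omega, show t ≠ m by omega]
    rw [hr, map_zero]
  have h4ne : (-4 : Hq) ≠ 0 := by
    intro h
    have h2 : ((-4:ℝ) : Hq) = 0 := by push_cast; exact h
    have h3 := Quaternion.coe_injective
      (h2.trans (by push_cast; rfl : (0 : Hq) = ((0:ℝ) : Hq)))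
    norm_num at h3
  refine ⟨?_, ?_, ?_, ⟨2*m+1, ⟨⟨m, rfl⟩, by rw [h21]; exact h4ne⟩, ?_⟩, ?_⟩
  · rw [e1, e2, e3, hP4]
    unfold Φ
    simp only [Polynomial.map_add, Polynomial.map_sub, Polynomial.map_neg,
      Polynomial.map_pow, Polynomial.map_X, C_add, C_sub, mul_add, mul_sub,
      add_mul, sub_mul, neg_mul]
    abel
  · rw [e4, normalPoly, hP4, Φ_conj, Φ_mul]
    have : (X : Hq[X]) ^ (2*m) * (X^2+1)^3 = Φ (X^(2*m) * (X^2+1)^3) 0 0 0 := by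
      rw [Φ_real]
      simp [Polynomial.map_mul, Polynomial.map_pow, Polynomial.map_add,
        Polynomial.map_one, Polynomial.map_X]
    rw [this]
    exact Φ_congr (by ring) (by ring) (by ring) (by ring)
  · rw [e4, e5, e6, e7, hN', Φ_real]
    have hc1 : ((m+3 : ℕ) : Hq[X]) - 1 = ((m+2 : ℕ) : Hq[X]) := by
      rw [show (1:Hq[X]) = ((1:ℕ) : Hq[X]) from by norm_num,
        ← Nat.cast_sub (by omega), e1]
    have hc2 : ((m+3 : ℕ) : Hq[X]) - 2 = ((m+1 : ℕ) : Hq[X]) := by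
      rw [show (2:Hq[X]) = ((2:ℕ) : Hq[X]) from by norm_num,
        ← Nat.cast_sub (by omega), e2]
    have hc3 : ((m+3 : ℕ) : Hq[X]) - 3 = ((m : ℕ) : Hq[X]) := by
      rw [show (3:Hq[X]) = ((3:ℕ) : Hq[X]) from by norm_num,
        ← Nat.cast_sub (by omega), e3]
    rw [hc1, hc2, hc3, hRdef]
    simp only [Polynomial.map_add, Polynomial.map_sub, Polynomial.map_mul,
      Polynomial.map_pow, Polynomial.map_X, Polynomial.map_natCast]
    push_cast
    rfl
  · rintro y ⟨hyodd, hyne⟩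
    by_contra h
    exact hyne (hzero y hyodd h)
  · rw [e7]
    exact h21

end
end

section
/- For every MONIC quaternionic polynomial P ∈ ℍ[X] of degree ≥ 2, the Gauss-Lucas snail of the derivative is contained in the Gauss-Lucas snail of P: sn(P') ⊆ sn(P). -/
open Polynomial
open scoped Classical RealInnerProductSpace ENNReal

noncomputable section

lemma multiset_sum_nonneg (s : Multiset ℝ) (h : ∀ x ∈ s, 0 ≤ x) : 0 ≤ s.sum := by
  induction s using Multiset.induction_on with
  | empty => simp
  | cons a t ih =>
    rw [Multiset.sum_cons]
    have h1 := h a (Multiset.mem_cons_self a t)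
    have h2 := ih fun x hx => h x (Multiset.mem_cons_of_mem hx)
    linarith

lemma multiset_sum_pos (s : Multiset ℝ) (h0 : s ≠ 0) (h : ∀ x ∈ s, 0 < x) : 0 < s.sum := by
  obtain ⟨a, ha⟩ := Multiset.exists_mem_of_ne_zero h0
  rw [← Multiset.cons_erase ha, Multiset.sum_cons]
  have h1 := h a ha
  have h2 := multiset_sum_nonneg (s.erase a) fun x hx => (h x (Multiset.mem_of_mem_erase hx)).le
  linarith

/-- Gauss–Lucas over ℂ. -/
lemma gaussLucas_complex (Q : ℂ[X]) (hQ : 1 ≤ Q.natDegree) {z : ℂ}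
    (hz : (derivative Q).eval z = 0) : z ∈ convexHull ℝ {w : ℂ | Q.eval w = 0} := by
  by_cases h0 : Q.eval z = 0
  · exact subset_convexHull ℝ _ h0
  have hQ0 : Q ≠ 0 := fun h => by simp [h] at hQ
  have hsplit : Q.Splits := IsAlgClosed.splits Q
  have hroots : {w : ℂ | Q.eval w = 0} = (Q.roots.toFinset : Set ℂ) := by
    ext w
    simp [Multiset.mem_toFinset, mem_roots hQ0, IsRoot]
  rw [hroots]
  by_contra hzK
  obtain ⟨f, u, hfu⟩ := geometric_hahn_banach_closed_point
    (convex_convexHull ℝ _) ((Q.roots.toFinset.finite_toSet).isClosed_convexHull (𝕜 := ℝ)) hzK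
  have hcard : Multiset.card Q.roots = Q.natDegree := by
    have := hsplit.natDegree_eq_card_roots
    simpa using this.symm
  have hne : Q.roots ≠ 0 := by
    intro h
    rw [h] at hcard
    simp at hcard
    omega
  have hfact := hsplit.eq_prod_roots
  have hzr : ∀ r ∈ Q.roots, z - r ≠ 0 := by
    intro r hr h
    apply h0
    have hzr' : z = r := by linear_combination h
    rw [hzr']
    exact (mem_roots hQ0).1 hr
  set μ := Q.roots with hμ
  set T : ℂ := (μ.map fun r => z - r).prod with hT
  have hevalQ : eval z Q = Q.leadingCoeff * T := by
    conv_lhs => rw [hfact]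
    rw [eval_mul, eval_C]
    congr 1
    rw [eval_multiset_prod, Multiset.map_map, hT]
    exact congrArg _ (Multiset.map_congr rfl fun a _ => by simp)
  have herase : ∀ r ∈ μ, ((μ.erase r).map fun a => z - a).prod = (z - r)⁻¹ * T := by
    intro r hr
    have h2 : (z - r) * (Multiset.map (fun a => z - a) (μ.erase r)).prod
        = (Multiset.map (fun a => z - a) μ).prod :=
      Multiset.prod_map_erase (f := fun a => z - a) hr
    rw [hT, ← h2, inv_mul_cancel_left₀ (hzr r hr)]
  have hd : eval z (derivative Q)
      = Q.leadingCoeff * ((μ.map fun r => (z - r)⁻¹).sum * T) := by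
    conv_lhs => rw [hfact]
    rw [derivative_mul, derivative_C, zero_mul, zero_add, eval_mul, eval_C, derivative_prod]
    congr 1
    rw [show eval z (Multiset.map (fun i =>
        (Multiset.map (fun a => X - C a) (μ.erase i)).prod * derivative (X - C i)) μ).sum
        = ((Multiset.map (fun i =>
        (Multiset.map (fun a => X - C a) (μ.erase i)).prod * derivative (X - C i)) μ).map
        (evalRingHom z)).sum from map_multiset_sum (evalRingHom z) _, Multiset.map_map]
    have hcongr : Multiset.map ((evalRingHom z) ∘ fun i =>
        (Multiset.map (fun a => X - C a) (μ.erase i)).prod * derivative (X - C i)) μ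
        = Multiset.map (fun i => (z - i)⁻¹ * T) μ := by
      refine Multiset.map_congr rfl fun r hr => ?_
      simp only [Function.comp_apply, derivative_sub, derivative_X, derivative_C, sub_zero,
        mul_one, coe_evalRingHom]
      rw [eval_multiset_prod, Multiset.map_map]
      have heq : Multiset.map ((eval z) ∘ fun a => X - C a) (μ.erase r)
          = Multiset.map (fun a => z - a) (μ.erase r) :=
        Multiset.map_congr rfl fun a _ => by simp
      rw [heq, herase r hr]
    rw [hcongr, ← Multiset.sum_map_mul_right]
  have hsum : (μ.map fun r => (z - r)⁻¹).sum = 0 := by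
    have hlc : Q.leadingCoeff ≠ 0 := leadingCoeff_ne_zero.2 hQ0
    have hTne : T ≠ 0 := by
      rw [hT]
      refine Multiset.prod_ne_zero ?_
      intro hmem
      obtain ⟨r, hr, hr0⟩ := Multiset.mem_map.1 hmem
      exact hzr r hr hr0
    rw [hd] at hz
    rcases mul_eq_zero.1 hz with h | h
    · exact absurd h hlc
    · rcases mul_eq_zero.1 h with h' | h'
      · exact h'
      · exact absurd h' hTne
  -- apply f ∘ conj
  set g : ℂ → ℝ := fun w => f ((starRingEnd ℂ) w) with hg
  have hg0 : (μ.map fun r => g ((z - r)⁻¹)).sum = 0 := by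
    have : (μ.map fun r => g ((z - r)⁻¹)).sum
        = f ((starRingEnd ℂ) (μ.map fun r => (z - r)⁻¹).sum) := by
      rw [map_multiset_sum (starRingEnd ℂ), map_multiset_sum f, Multiset.map_map,
        Multiset.map_map]
      rfl
    rw [this, hsum]
    simp
  have hpos : ∀ r ∈ μ, 0 < g ((z - r)⁻¹) := by
    intro r hr
    have hfr : f r < u := hfu.1 r (subset_convexHull ℝ _ (by simp only [Finset.mem_coe, Multiset.mem_toFinset]; exact hr))
    have hw : (starRingEnd ℂ) ((z - r)⁻¹) = (Complex.normSq (z - r))⁻¹ • (z - r) := by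
      rw [map_inv₀, Complex.inv_def, Complex.conj_conj, Complex.normSq_conj, Complex.real_smul]
      push_cast
      ring
    have hns : 0 < Complex.normSq (z - r) := Complex.normSq_pos.2 (hzr r hr)
    show 0 < f ((starRingEnd ℂ) ((z - r)⁻¹))
    rw [hw]
    simp only [map_smul, map_sub, smul_eq_mul]
    have : 0 < f z - f r := by
      have := hfu.2
      linarith
    positivity
  have hfinal := multiset_sum_pos (μ.map fun r => g ((z - r)⁻¹)) (by simpa using hne)
    (fun x hx => by
      obtain ⟨r, hr, rfl⟩ := Multiset.mem_map.1 hx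
      exact hpos r hr)
  rw [hg0] at hfinal
  exact lt_irrefl 0 hfinal

-- basic facts about I with I^2 = -1
lemma imagUnit_mul (I : Hq) (hI : I ∈ sphereS) : I * I = -1 := by
  have := hI
  rwa [sphereS, Set.mem_setOf_eq, sq] at this

lemma imagUnit_re (I : Hq) (hI : I ∈ sphereS) : I.re = 0 := by
  have h := imagUnit_mul I hI
  have hre : (I * I).re = (-1 : Hq).re := by rw [h]
  have himI : (I * I).imI = (-1 : Hq).imI := by rw [h]
  have himJ : (I * I).imJ = (-1 : Hq).imJ := by rw [h]
  have himK : (I * I).imK = (-1 : Hq).imK := by rw [h]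
  simp only [Quaternion.re_mul, Quaternion.imI_mul, Quaternion.imJ_mul, Quaternion.imK_mul,
    Quaternion.re_neg, Quaternion.imI_neg, Quaternion.imJ_neg, Quaternion.imK_neg,
    Quaternion.re_one, Quaternion.imI_one, Quaternion.imJ_one, Quaternion.imK_one,
    neg_zero] at hre himI himJ himK
  rcases eq_or_ne I.re 0 with h0 | h0
  · exact h0
  · exfalso
    have h1 : I.imI = 0 := by
      have : I.re * I.imI = 0 := by linarith
      rcases mul_eq_zero.1 this with h | h
      · exact absurd h h0
      · exact h
    have h2 : I.imJ = 0 := by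
      have : I.re * I.imJ = 0 := by linarith
      rcases mul_eq_zero.1 this with h | h
      · exact absurd h h0
      · exact h
    have h3 : I.imK = 0 := by
      have : I.re * I.imK = 0 := by linarith
      rcases mul_eq_zero.1 this with h | h
      · exact absurd h h0
      · exact h
    rw [h1, h2, h3] at hre
    nlinarith

lemma imagUnit_norm (I : Hq) (hI : I ∈ sphereS) : ‖I‖ = 1 := by
  have h := imagUnit_mul I hI
  have h1 : ‖I * I‖ = ‖I‖ * ‖I‖ := norm_mul I I
  rw [h] at h1
  have h2 : ‖(-1 : Hq)‖ = 1 := by simp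
  nlinarith [norm_nonneg I]

lemma inner_one_right (a : Hq) : ⟪a, (1 : Hq)⟫ = a.re := by
  rw [Quaternion.inner_def]
  simp

lemma inner_I_one (I : Hq) (hI : I ∈ sphereS) : ⟪(1 : Hq), I⟫ = 0 := by
  rw [Quaternion.inner_def]
  simp [imagUnit_re I hI]

lemma inner_I_I (I : Hq) (hI : I ∈ sphereS) : ⟪I, I⟫ = 1 := by
  rw [real_inner_self_eq_norm_sq, imagUnit_norm I hI]
  norm_num

/-- The complex-coefficient "shadow" of the quaternionic polynomial. -/
def psiC (I : Hq) (a : Hq) : ℂ := ⟨⟪a, (1 : Hq)⟫, ⟪a, I⟫⟩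

def phiC (I : Hq) (hI : I * I = -1) : ℂ →ₐ[ℝ] Hq := Complex.liftAux I hI

lemma phiC_psiC (I : Hq) (hI : I * I = -1) (a : Hq) :
    phiC I hI (psiC I a) = piProj I a := by
  rw [phiC, Complex.liftAux_apply, piProj, psiC, Algebra.algebraMap_eq_smul_one]

lemma psiC_zero (I : Hq) : psiC I 0 = 0 := by
  rw [psiC]
  simp only [inner_zero_left]
  rfl

lemma psiC_add (I : Hq) (a b : Hq) : psiC I (a + b) = psiC I a + psiC I b := by
  rw [psiC, psiC, psiC, Complex.ext_iff]
  constructor <;> simp [inner_add_left]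

lemma psiC_one (I : Hq) (hI : I ∈ sphereS) : psiC I 1 = 1 := by
  rw [psiC, Complex.ext_iff]
  constructor
  · simp [inner_one_right]
  · simp [inner_I_one I hI]

lemma psiC_smul (I : Hq) (r : ℝ) (a : Hq) : psiC I (r • a) = r • psiC I a := by
  rw [psiC, psiC, Complex.ext_iff]
  constructor <;> simp [real_inner_smul_left]

lemma psiC_natmul (I : Hq) (a : Hq) (n : ℕ) :
    psiC I (a * (n : Hq)) = psiC I a * (n : ℂ) := by
  have h1 : a * (n : Hq) = (n : ℝ) • a := by
    rw [show ((n : Hq)) = ((n : ℝ) : Hq) by push_cast; rfl, Quaternion.mul_coe_eq_smul]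
  rw [h1, psiC_smul]
  rw [show ((n : ℂ)) = ((n : ℝ) : ℂ) by push_cast; rfl, mul_comm, ← Complex.real_smul]

/-- Generic coefficient lemma for `P.sum fun k a => C (f a) * X^k`. -/
lemma coeff_sumCX {S : Type*} [Semiring S] (f : Hq → S) (hf0 : f 0 = 0) (P : Hq[X]) (n : ℕ) :
    (P.sum fun k a => C (f a) * X ^ k).coeff n = f (P.coeff n) := by
  rw [Polynomial.sum_def, finset_sum_coeff]
  simp only [coeff_C_mul, coeff_X_pow, mul_ite, mul_one, mul_zero]
  rw [Finset.sum_ite_eq P.support n (fun k => f (P.coeff k))]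
  split_ifs with h
  · rfl
  · rw [Polynomial.notMem_support_iff.1 h, hf0]

def QCpoly (I : Hq) (P : Hq[X]) : ℂ[X] := P.sum fun k a => C (psiC I a) * X ^ k

lemma coeff_QCpoly (I : Hq) (P : Hq[X]) (n : ℕ) :
    (QCpoly I P).coeff n = psiC I (P.coeff n) :=
  coeff_sumCX _ (psiC_zero I) P n

lemma piProj_zero (I : Hq) : piProj I 0 = 0 := by
  simp [piProj]

lemma coeff_projPoly (I : Hq) (P : Hq[X]) (n : ℕ) :
    (projPoly I P).coeff n = piProj I (P.coeff n) :=
  coeff_sumCX _ (piProj_zero I) P n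

lemma projPoly_eq_map (I : Hq) (hI : I * I = -1) (P : Hq[X]) :
    projPoly I P = (QCpoly I P).map (phiC I hI).toRingHom := by
  refine Polynomial.ext fun n => ?_
  rw [coeff_projPoly, coeff_map, coeff_QCpoly]
  exact (phiC_psiC I hI (P.coeff n)).symm

lemma QCpoly_derivative (I : Hq) (P : Hq[X]) :
    QCpoly I (derivative P) = derivative (QCpoly I P) := by
  refine Polynomial.ext fun n => ?_
  rw [coeff_QCpoly, coeff_derivative, coeff_derivative, coeff_QCpoly]
  have := psiC_natmul I (P.coeff (n + 1)) (n + 1)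
  push_cast at this ⊢
  exact this

lemma QCpoly_natDegree (I : Hq) (hI : I ∈ sphereS) (P : Hq[X]) (hm : P.Monic)
    (hd : 1 ≤ P.natDegree) : (QCpoly I P).natDegree = P.natDegree ∧ (QCpoly I P).Monic := by
  have hcoeff : (QCpoly I P).coeff P.natDegree = 1 := by
    rw [coeff_QCpoly, show P.coeff P.natDegree = 1 from hm, psiC_one I hI]
  have hle : (QCpoly I P).natDegree ≤ P.natDegree := by
    apply natDegree_le_iff_coeff_eq_zero.2
    intro m hm'
    rw [coeff_QCpoly, coeff_eq_zero_of_natDegree_lt hm', psiC_zero]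
  have hge : P.natDegree ≤ (QCpoly I P).natDegree :=
    le_natDegree_of_ne_zero (by rw [hcoeff]; exact one_ne_zero)
  have hdeg : (QCpoly I P).natDegree = P.natDegree := le_antisymm hle hge
  exact ⟨hdeg, by rwa [Polynomial.Monic, Polynomial.leadingCoeff, hdeg]⟩

lemma Cplane_eq_range (I : Hq) (hI : I * I = -1) :
    Cplane I = Set.range (phiC I hI) := by
  ext x
  constructor
  · rintro ⟨a, b, rfl⟩
    exact ⟨⟨a, b⟩, by rw [phiC, Complex.liftAux_apply]⟩
  · rintro ⟨z, rfl⟩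
    exact ⟨z.re, z.im, by rw [phiC, Complex.liftAux_apply]⟩

lemma evalQ_map (I : Hq) (hI : I * I = -1) (q : ℂ[X]) (z : ℂ) :
    evalQ (q.map (phiC I hI).toRingHom) (phiC I hI z) = phiC I hI (q.eval z) := by
  set φ := phiC I hI
  rw [evalQ]
  rw [Polynomial.sum_over_range' _ (fun n => by rw [mul_zero]) (q.natDegree + 1)
      (lt_of_le_of_lt natDegree_map_le (Nat.lt_succ_self _))]
  rw [Polynomial.eval_eq_sum_range' (Nat.lt_succ_self q.natDegree), map_sum]
  refine Finset.sum_congr rfl fun k _ => ?_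
  rw [coeff_map]
  simp only [AlgHom.toRingHom_eq_coe, RingHom.coe_coe]
  rw [← map_pow, ← map_mul]
  exact congrArg _ (mul_comm _ _)

lemma phiC_inj (I : Hq) (hI : I * I = -1) : Function.Injective (phiC I hI) :=
  (phiC I hI).toRingHom.injective

lemma VQ_inter (I : Hq) (hI : I * I = -1) (q : ℂ[X]) :
    VQ (q.map (phiC I hI).toRingHom) ∩ Cplane I
      = (phiC I hI) '' {z : ℂ | q.eval z = 0} := by
  ext x
  constructor
  · rintro ⟨hv, hc⟩
    rw [Cplane_eq_range I hI] at hc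
    obtain ⟨z, rfl⟩ := hc
    refine ⟨z, ?_, rfl⟩
    have h0 : evalQ (q.map (phiC I hI).toRingHom) (phiC I hI z) = 0 := hv
    rw [evalQ_map I hI] at h0
    have := phiC_inj I hI (by rw [h0, map_zero] : phiC I hI (q.eval z) = phiC I hI 0)
    exact this
  · rintro ⟨z, hz, rfl⟩
    refine ⟨?_, by rw [Cplane_eq_range I hI]; exact ⟨z, rfl⟩⟩
    show evalQ _ _ = 0
    rw [evalQ_map I hI, show q.eval z = 0 from hz, map_zero]

lemma notconst (I : Hq) (hI : I * I = -1) (q : ℂ[X]) (hq : 1 ≤ q.natDegree) :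
    ¬ ∃ c, ∀ x ∈ Cplane I, evalQ (q.map (phiC I hI).toRingHom) x = c := by
  rintro ⟨c, hc⟩
  have h1 : ∀ z : ℂ, phiC I hI (q.eval z) = c := fun z => by
    rw [← evalQ_map I hI]
    exact hc _ (by rw [Cplane_eq_range I hI]; exact ⟨z, rfl⟩)
  have h2 : q = C (q.eval 0) := Polynomial.funext fun z => by
    rw [eval_C]
    exact phiC_inj I hI (by rw [h1, h1])
  rw [h2] at hq
  simp [natDegree_C] at hq

lemma KC_map (I : Hq) (hI : I * I = -1) (q : ℂ[X]) (hq : 1 ≤ q.natDegree) :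
    KC I (q.map (phiC I hI).toRingHom)
      = (phiC I hI) '' (convexHull ℝ {z : ℂ | q.eval z = 0}) := by
  rw [KC, if_neg (notconst I hI q hq), VQ_inter I hI]
  exact ((phiC I hI).toLinearMap.image_convexHull {z : ℂ | q.eval z = 0}).symm

lemma key (I : Hq) (hIs : I ∈ sphereS) (P : Hq[X]) (hm : P.Monic) (hdeg : 2 ≤ P.natDegree) :
    KC I (projPoly I (derivative P)) ⊆ KC I (projPoly I P) := by
  have hI : I * I = -1 := imagUnit_mul I hIs
  obtain ⟨hQdeg, hQmonic⟩ := QCpoly_natDegree I hIs P hm (le_trans one_le_two hdeg)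
  set Q := QCpoly I P with hQ
  have hQd2 : 2 ≤ Q.natDegree := by rw [hQdeg]; exact hdeg
  have hd1 : 1 ≤ (derivative Q).natDegree := by
    have hcoeff : (derivative Q).coeff (Q.natDegree - 1) ≠ 0 := by
      rw [coeff_derivative]
      have he : Q.natDegree - 1 + 1 = Q.natDegree := by omega
      rw [he, hQmonic.coeff_natDegree, one_mul]
      exact Nat.cast_add_one_ne_zero (R := ℂ) (Q.natDegree - 1)
    have := le_natDegree_of_ne_zero hcoeff
    omega
  rw [projPoly_eq_map I hI P, projPoly_eq_map I hI (derivative P), QCpoly_derivative I P]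
  rw [KC_map I hI Q (by omega), KC_map I hI (derivative Q) hd1]
  refine Set.image_mono ?_
  exact convexHull_min (fun z hz => gaussLucas_complex Q (by omega) hz)
    (convex_convexHull ℝ _)

theorem stmt12 (P : Hq[X]) (hm : P.Monic) (hdeg : 2 ≤ P.natDegree) :
    snail (derivative P) ⊆ snail P := by
  intro x hx
  rw [snail, Set.mem_iUnion₂] at hx ⊢
  obtain ⟨I, hIs, hx⟩ := hx
  exact ⟨I, hIs, key I hIs P hm hdeg hx⟩

end
end
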